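/- arXiv:1705.03835 — 7 statements merged into one kernel-verified Lean document; each statement's English description precedes it below -/
import Mathlib

section
/- Let q be a prime power and let v, k, t, m be integers with 0 ≤ t ≤ k ≤ v and k−t ≤ m ≤ v. Let W be a fixed m-dimensional subspace of 𝔽_q^v. Then the number of k-dimensional subspaces U of 𝔽_q^v with dim(U ∩ W) ≥ k−t equals Σ_{i=0}^{t} q^{(m+i−k)·i} · [m, k−i]_q · [v−m, i]_q, where any summand in which a Gaussian binomial factor is zero (i.e. with k−i > m or i > v−m) is understood to be zero. -/
/-! Double counting. Call `f : Fin n → V` independent modulo `A` inside `C` if its entries lie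
in `C` and their images in `V ⧸ A` are linearly independent; choosing the entries one at a time
shows there are `q^(a n) ∏_{l<n} (q^(c-a) - q^l)` such tuples when `A ≤ C` have dimensions
`a ≤ c`. For `U` of dimension `j + i` with `dim (U ⊓ W) = j`, a basis `x` of `U ⊓ W` together
with an `i`-tuple `g` independent modulo `U ⊓ W` inside `U` is the same as a basis `x` of a
`j`-dimensional subspace of `W` together with an `i`-tuple `g` independent modulo `W`, since
`U = span x ⊔ span g` is recovered from them. Comparing the two counts gives
`q^((m-j) i) [m, j]_q [v-m, i]_q` subspaces `U`; summing over `j = k - i ≥ k - t` gives the theorem.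
-/

open Finset

/-- The Gaussian binomial coefficient `[a, b]_q = ∏_{i=1}^{b} (q^{a-b+i}-1)/(q^i-1)`
for `0 ≤ b ≤ a`, and `0` whenever `b > a`, as a rational number. -/
noncomputable def gaussQ (q a b : ℕ) : ℚ :=
  if b ≤ a then ∏ i ∈ Finset.range b, ((q : ℚ) ^ (a - b + (i + 1)) - 1) / ((q : ℚ) ^ (i + 1) - 1)
  else 0

open Submodule Module Set

section IndepModIn

variable {F V ι : Type*} [DivisionRing F] [AddCommGroup V] [Module F V]
  {A A' C C' : Submodule F V} {j i : ℕ}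

def IndepModIn (A C : Submodule F V) (f : ι → V) : Prop :=
  (∀ l, f l ∈ C) ∧ LinearIndependent F (A.mkQ ∘ f)

theorem indepModIn_iff {f : ι → V} :
    IndepModIn A C f ↔ (∀ l, f l ∈ C) ∧ LinearIndependent F f ∧ Disjoint A (span F (range f)) := by
  refine and_congr_right fun _ => ⟨fun h => ⟨h.of_comp, ?_⟩, fun ⟨hf, hA⟩ => hf.map ?_⟩
  · simpa [disjoint_comm] using Submodule.range_ker_disjoint h
  · rwa [ker_mkQ, disjoint_comm]

theorem IndepModIn.mono {f : ι → V} (h : IndepModIn A C f) (hA : A' ≤ A) (hC : C ≤ C') :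
    IndepModIn A' C' f := by
  obtain ⟨hfC, hf, hdisj⟩ := indepModIn_iff.1 h
  exact indepModIn_iff.2 ⟨fun l => hC (hfC l), hf, hdisj.mono_left hA⟩

theorem IndepModIn.span_le {f : ι → V} (h : IndepModIn A C f) : span F (range f) ≤ C :=
  Submodule.span_le.2 (range_subset_iff.2 h.1)

theorem IndepModIn.of_inf {U W : Submodule F V} {f : ι → V} (h : IndepModIn (U ⊓ W) U f) :
    IndepModIn W ⊤ f := by
  obtain ⟨-, hf, hdisj⟩ := indepModIn_iff.1 h
  refine indepModIn_iff.2 ⟨fun _ => mem_top, hf, disjoint_def.2 fun x hxW hxf => ?_⟩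
  exact disjoint_def.1 hdisj x ⟨h.span_le hxf, hxW⟩ hxf

theorem IndepModIn.finrank_sup [Fintype ι] [FiniteDimensional F V] {f : ι → V}
    (h : IndepModIn A C f) :
    finrank F ↥(A ⊔ span F (range f)) = finrank F A + Fintype.card ι := by
  obtain ⟨-, hf, hdisj⟩ := indepModIn_iff.1 h
  have := Submodule.finrank_sup_add_finrank_inf_eq A (span F (range f))
  rwa [disjoint_iff.1 hdisj, finrank_bot, add_zero, finrank_span_eq_card hf] at this

theorem IndepModIn.finrank_span [Fintype ι] {f : ι → V} (h : IndepModIn A C f) :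
    finrank F (span F (range f)) = Fintype.card ι :=
  finrank_span_eq_card (indepModIn_iff.1 h).2.1

theorem indepModIn_cons_iff {n : ℕ} {f : Fin n → V} {x : V} :
    IndepModIn A C (Fin.cons x f) ↔ (x ∈ C ∧ x ∉ A ⊔ span F (range f)) ∧ IndepModIn A C f := by
  have hmem : A.mkQ x ∈ span F (range (A.mkQ ∘ f)) ↔ x ∈ A ⊔ span F (range f) := by
    rw [range_comp, span_image, ← mem_comap, comap_map_mkQ]
  simp only [IndepModIn, Fin.forall_fin_succ, Fin.cons_zero, Fin.cons_succ, Fin.comp_cons,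
    linearIndependent_finCons, hmem]
  tauto

theorem span_sup_span_eq_of_indepModIn [FiniteDimensional F V] {U W : Submodule F V}
    {x : Fin j → V} {g : Fin i → V} (hU : finrank F U = j + i) (hUW : finrank F ↥(U ⊓ W) = j)
    (hx : IndepModIn ⊥ (U ⊓ W) x) (hg : IndepModIn (U ⊓ W) U g) :
    span F (range x) ⊔ span F (range g) = U := by
  have hxUW : span F (range x) = U ⊓ W :=
    eq_of_le_of_finrank_eq hx.span_le (by rw [hx.finrank_span, hUW, Fintype.card_fin])
  rw [hxUW]
  exact eq_of_le_of_finrank_eq (sup_le inf_le_left hg.span_le)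
    (by rw [hg.finrank_sup, hUW, hU, Fintype.card_fin])

theorem span_sup_span_inf_eq_of_indepModIn {W : Submodule F V} {x : Fin j → V} {g : Fin i → V}
    (hx : IndepModIn ⊥ W x) (hg : IndepModIn W ⊤ g) :
    (span F (range x) ⊔ span F (range g)) ⊓ W = span F (range x) := by
  rw [sup_inf_assoc_of_le _ hx.span_le, inf_comm, disjoint_iff.1 (indepModIn_iff.1 hg).2.2,
    sup_bot_eq]

end IndepModIn

section GaussQ

variable {q d n : ℕ}

theorem gaussQ_eq_prod_div (hq : q ≠ 0) (h : n ≤ d) :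
    gaussQ q d n = ∏ l ∈ range n, ((q : ℚ) ^ d - q ^ l) / ((q : ℚ) ^ n - q ^ l) := by
  rw [gaussQ, if_pos h, ← prod_range_reflect]
  refine prod_congr rfl fun l hl => ?_
  have hl := mem_range.1 hl
  have hfactor (e : ℕ) (he : l ≤ e) : (q : ℚ) ^ e - q ^ l = q ^ l * (q ^ (e - l) - 1) := by
    rw [mul_sub, ← pow_add, Nat.add_sub_cancel' he, mul_one]
  rw [hfactor d (by omega), hfactor n hl.le,
    mul_div_mul_left _ _ (pow_ne_zero _ (by exact_mod_cast hq))]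
  congr 3 <;> omega

theorem prod_pow_sub_pow_ne_zero (hq : 2 ≤ q) (n : ℕ) :
    ∏ l ∈ range n, ((q : ℚ) ^ n - q ^ l) ≠ 0 :=
  prod_ne_zero_iff.2 fun l hl =>
    sub_ne_zero.2 (pow_lt_pow_right₀ (by exact_mod_cast hq) (mem_range.1 hl)).ne'

theorem gaussQ_mul_prod (hq : 2 ≤ q) (h : n ≤ d) :
    gaussQ q d n * ∏ l ∈ range n, ((q : ℚ) ^ n - q ^ l) = ∏ l ∈ range n, ((q : ℚ) ^ d - q ^ l) := by
  rw [gaussQ_eq_prod_div (by omega) h, prod_div_distrib,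
    div_mul_cancel₀ _ (prod_pow_sub_pow_ne_zero hq n)]

theorem cast_prod_pow_sub_pow (hq : 1 ≤ q) (h : n ≤ d) :
    ((∏ l ∈ range n, (q ^ d - q ^ l) : ℕ) : ℚ) = ∏ l ∈ range n, ((q : ℚ) ^ d - q ^ l) := by
  rw [Nat.cast_prod]
  refine prod_congr rfl fun l hl => ?_
  rw [Nat.cast_sub (Nat.pow_le_pow_right hq (by have := mem_range.1 hl; omega))]
  push_cast
  rfl

end GaussQ

theorem natCard_sub_le_eq_sum {α : Type*} [Finite α] (p : α → Prop) (g : α → ℕ) {k t : ℕ}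
    (htk : t ≤ k) (hg : ∀ a, p a → g a ≤ k) :
    Nat.card {a // p a ∧ k - t ≤ g a} =
      ∑ i ∈ range (t + 1), Nat.card {a // p a ∧ g a = k - i} := by
  classical
  have := Fintype.ofFinite α
  simp only [Nat.card_eq_fintype_card, Fintype.card_subtype]
  rw [card_eq_sum_card_fiberwise (f := fun a => k - g a) (t := range (t + 1))]
  · refine sum_congr rfl fun i hi => ?_
    rw [filter_filter]
    refine congrArg _ (filter_congr fun a _ => ?_)
    have := Finset.mem_range.1 hi
    by_cases hp : p a
    · have := hg a hp
      simp only [hp, true_and]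
      omega
    · simp [hp]
  · intro a ha
    have := hg a (mem_filter.1 ha).2.1
    have := (mem_filter.1 ha).2.2
    simp only [Finset.mem_coe, Finset.mem_range]
    omega

section Counting

variable {F V : Type*} [DivisionRing F] [Finite F] [AddCommGroup V] [Module F V] [Finite V]

local notation "q" => Nat.card F

theorem natCard_mem_and_not_mem {B C : Submodule F V} (hBC : B ≤ C) :
    Nat.card {x : V // x ∈ C ∧ x ∉ B} = q ^ finrank F C - q ^ finrank F B := by
  change Nat.card ↥((C : Set V) \ B) = _
  rw [Nat.card_coe_set_eq, ncard_sdiff (by exact_mod_cast hBC), ← Nat.card_coe_set_eq,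
    ← Nat.card_coe_set_eq, SetLike.coe_sort_coe, SetLike.coe_sort_coe,
    natCard_eq_pow_finrank (K := F) (V := C), natCard_eq_pow_finrank (K := F) (V := B)]

def indepModInConsEquiv (A C : Submodule F V) (n : ℕ) :
    {f : Fin (n + 1) → V // IndepModIn A C f} ≃
      Σ f : {f : Fin n → V // IndepModIn A C f},
        {x : V // x ∈ C ∧ x ∉ A ⊔ span F (range f.1)} where
  toFun f :=
    have h := indepModIn_cons_iff.1 (Fin.cons_self_tail f.1 ▸ f.2)
    ⟨⟨Fin.tail f.1, h.2⟩, ⟨f.1 0, h.1⟩⟩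
  invFun f := ⟨Fin.cons f.2.1 f.1.1, indepModIn_cons_iff.2 ⟨f.2.2, f.1.2⟩⟩
  left_inv f := by simp
  right_inv := fun ⟨⟨_, _⟩, ⟨_, _⟩⟩ => rfl

theorem natCard_indepModIn {A C : Submodule F V} (hAC : A ≤ C) (n : ℕ) :
    Nat.card {f : Fin n → V // IndepModIn A C f} =
      q ^ (finrank F A * n) * ∏ l ∈ range n, (q ^ (finrank F C - finrank F A) - q ^ l) := by
  induction n with
  | zero =>
    have : Unique {f : Fin 0 → V // IndepModIn A C f} :=
      ⟨⟨⟨finZeroElim, finZeroElim, linearIndependent_empty_type⟩⟩, fun _ => Subsingleton.elim _ _⟩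
    simp
  | succ n ih =>
    have : Fintype {f : Fin n → V // IndepModIn A C f} := Fintype.ofFinite _
    have hfiber (f : {f : Fin n → V // IndepModIn A C f}) :
        Nat.card {x : V // x ∈ C ∧ x ∉ A ⊔ span F (range f.1)} =
          q ^ finrank F A * (q ^ (finrank F C - finrank F A) - q ^ n) := by
      rw [natCard_mem_and_not_mem (sup_le hAC f.2.span_le), f.2.finrank_sup, Fintype.card_fin,
        Nat.mul_sub, ← pow_add, ← pow_add, Nat.add_sub_cancel' (finrank_mono hAC)]
    rw [Nat.card_congr (indepModInConsEquiv A C n), Nat.card_sigma,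
      sum_congr rfl fun f _ => hfiber f, sum_const, card_univ, ← Nat.card_eq_fintype_card, ih,
      smul_eq_mul, prod_range_succ]
    ring

theorem natCard_finrank_inf_mul (W : Submodule F V) (j i : ℕ) :
    Nat.card {U : Submodule F V // finrank F U = j + i ∧ finrank F ↥(U ⊓ W) = j} *
        ((∏ l ∈ range j, (q ^ j - q ^ l)) * (q ^ (j * i) * ∏ l ∈ range i, (q ^ i - q ^ l))) =
      (∏ l ∈ range j, (q ^ finrank F W - q ^ l)) *
        (q ^ (finrank F W * i) * ∏ l ∈ range i, (q ^ (finrank F V - finrank F W) - q ^ l)) := by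
  let S := {U : Submodule F V // finrank F U = j + i ∧ finrank F ↥(U ⊓ W) = j}
  let Φ : (Σ U : S, {x : Fin j → V // IndepModIn ⊥ (U.1 ⊓ W) x} ×
      {g : Fin i → V // IndepModIn (U.1 ⊓ W) U.1 g}) →
      {x : Fin j → V // IndepModIn ⊥ W x} × {g : Fin i → V // IndepModIn W ⊤ g} :=
    fun p => (⟨p.2.1.1, p.2.1.2.mono le_rfl inf_le_right⟩, ⟨p.2.2.1, p.2.2.2.of_inf⟩)
  have hΦ : Function.Bijective Φ := by
    constructor
    · rintro ⟨⟨U, hU, hUW⟩, ⟨x, hx⟩, ⟨g, hg⟩⟩ ⟨⟨U', hU', hUW'⟩, ⟨x', hx'⟩, ⟨g', hg'⟩⟩ hΦ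
      obtain ⟨rfl, rfl⟩ : x = x' ∧ g = g' := ⟨congrArg (·.1.1) hΦ, congrArg (·.2.1) hΦ⟩
      obtain rfl : U = U' := by
        rw [← span_sup_span_eq_of_indepModIn hU hUW hx hg,
          ← span_sup_span_eq_of_indepModIn hU' hUW' hx' hg']
      rfl
    · rintro ⟨⟨x, hx⟩, ⟨g, hg⟩⟩
      have hUW := span_sup_span_inf_eq_of_indepModIn hx hg
      have hU : finrank F ↥(span F (range x) ⊔ span F (range g)) = j + i := by
        rw [(hg.mono hx.span_le le_rfl).finrank_sup, hx.finrank_span, Fintype.card_fin,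
          Fintype.card_fin]
      refine ⟨⟨⟨_, hU, by rw [hUW, hx.finrank_span, Fintype.card_fin]⟩, ⟨x, ?_⟩, ⟨g, ?_⟩⟩, rfl⟩
      · rw [hUW]
        exact ⟨fun l => subset_span (mem_range_self l), hx.2⟩
      · exact ⟨fun l => mem_sup_right (subset_span (mem_range_self l)),
          (hg.mono inf_le_right le_rfl).2⟩
  have : Fintype S := Fintype.ofFinite S
  have hfiber (U : S) :
      Nat.card ({x : Fin j → V // IndepModIn ⊥ (U.1 ⊓ W) x} ×
        {g : Fin i → V // IndepModIn (U.1 ⊓ W) U.1 g}) =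
      (∏ l ∈ range j, (q ^ j - q ^ l)) * (q ^ (j * i) * ∏ l ∈ range i, (q ^ i - q ^ l)) := by
    rw [Nat.card_prod, natCard_indepModIn bot_le, natCard_indepModIn inf_le_left, U.2.1, U.2.2]
    simp
  have hcard := Nat.card_eq_of_bijective Φ hΦ
  rw [Nat.card_sigma, sum_congr rfl fun U _ => hfiber U, sum_const, card_univ,
    ← Nat.card_eq_fintype_card, smul_eq_mul, Nat.card_prod, natCard_indepModIn bot_le,
    natCard_indepModIn le_top] at hcard
  simpa using hcard

theorem natCard_finrank_inf_eq (W : Submodule F V) (j i : ℕ) :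
    (Nat.card {U : Submodule F V // finrank F U = j + i ∧ finrank F ↥(U ⊓ W) = j} : ℚ) =
      (q : ℚ) ^ ((finrank F W - j) * i) * gaussQ q (finrank F W) j *
        gaussQ q (finrank F V - finrank F W) i := by
  have hq : 2 ≤ q := Finite.one_lt_card
  by_cases h : j ≤ finrank F W ∧ i ≤ finrank F V - finrank F W
  · obtain ⟨hj, hi⟩ := h
    have hcount := congrArg (Nat.cast : ℕ → ℚ) (natCard_finrank_inf_mul W j i)
    simp only [Nat.cast_mul, Nat.cast_pow, cast_prod_pow_sub_pow (by omega : 1 ≤ q) le_rfl,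
      cast_prod_pow_sub_pow (by omega : 1 ≤ q) hj, cast_prod_pow_sub_pow (by omega : 1 ≤ q) hi,
      ← gaussQ_mul_prod hq hj, ← gaussQ_mul_prod hq hi] at hcount
    have hpow : (q : ℚ) ^ (finrank F W * i) = q ^ (j * i) * q ^ ((finrank F W - j) * i) := by
      rw [← pow_add, ← add_mul, Nat.add_sub_cancel' hj]
    refine mul_right_cancel₀ ?_ (hcount.trans (by rw [hpow]; ring))
    exact mul_ne_zero (prod_pow_sub_pow_ne_zero hq j)
      (mul_ne_zero (by positivity) (prod_pow_sub_pow_ne_zero hq i))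
  · have : IsEmpty {U : Submodule F V // finrank F U = j + i ∧ finrank F ↥(U ⊓ W) = j} := by
      refine ⟨fun ⟨U, hU, hUW⟩ => h ⟨hUW ▸ finrank_mono inf_le_right, ?_⟩⟩
      have := finrank_sup_add_finrank_inf_eq U W
      have := finrank_le (U ⊔ W)
      omega
    rw [Nat.card_of_isEmpty, Nat.cast_zero]
    rcases not_and_or.1 h with h | h <;> simp [gaussQ, h]

end Counting

theorem stmt0_general (q : ℕ) (F : Type) [Field F] [Fintype F] (hF : Fintype.card F = q)
    (v k t m : ℕ) (htk : t ≤ k)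
    (W : Submodule F (Fin v → F)) (hW : Module.finrank F ↥W = m) :
    (Nat.card {U : Submodule F (Fin v → F) //
        Module.finrank F ↥U = k ∧ k - t ≤ Module.finrank F ↥(U ⊓ W)} : ℚ) =
      ∑ i ∈ Finset.range (t + 1),
        (q : ℚ) ^ ((m + i - k) * i) * gaussQ q m (k - i) * gaussQ q (v - m) i := by
  subst hF
  rw [natCard_sub_le_eq_sum _ _ htk fun U hU => hU ▸ finrank_mono inf_le_left, Nat.cast_sum]
  refine sum_congr rfl fun i hi => ?_
  have hik : i ≤ k := by have := Finset.mem_range.1 hi; omega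
  have := natCard_finrank_inf_eq W (k - i) i
  rwa [Nat.sub_add_cancel hik, hW, finrank_fin_fun, Nat.card_eq_fintype_card (α := F),
    show m - (k - i) = m + i - k by omega] at this

/-- Lemma 4 (counting subspaces with large intersection with a fixed subspace):
the number of `k`-dimensional subspaces `U` of `F_q^v` with `dim(U ∩ W) ≥ k - t`
equals `∑_{i=0}^{t} q^{(m+i-k)i} [m, k-i]_q [v-m, i]_q`. -/
theorem stmt0 (q : ℕ) (F : Type) [Field F] [Fintype F] (hF : Fintype.card F = q)
    (v k t m : ℕ) (htk : t ≤ k) (hkv : k ≤ v) (hm1 : k - t ≤ m) (hm2 : m ≤ v)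
    (W : Submodule F (Fin v → F)) (hW : Module.finrank F ↥W = m) :
    (Nat.card {U : Submodule F (Fin v → F) //
        Module.finrank F ↥U = k ∧ k - t ≤ Module.finrank F ↥(U ⊓ W)} : ℚ) =
      ∑ i ∈ Finset.range (t + 1),
        (q : ℚ) ^ ((m + i - k) * i) * gaussQ q m (k - i) * gaussQ q (v - m) i :=
  stmt0_general q F hF v k t m htk W hW
end

section
/- Let q be a prime power and let v, k, d be integers with 0 ≤ k < v, d even, and 2 ≤ d ≤ 2·min{k, v−k}. Then the inequality (q^k−1)² > (q^v−1)(q^{k−d/2}−1) holds if and only if k ≥ 1 and d = 2·min{k, v−k}. Moreover, if k ≥ 1 and d = 2·min{k, v−k}, then (q^k−q^{k−d/2})(q^v−1) / ((q^k−1)² − (q^v−1)(q^{k−d/2}−1)) = (q^v−1)/(q^{min{k,v−k}}−1). -/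
/-!
Write `d = 2e`, `k = a + e` and `v = a + 2e + t`, and put `A = q^a`, `E = q^e`, `T = q^t`.
The gap `(q^k - 1)² - (q^v - 1)(q^{k-d/2} - 1)` factors as `A ((E - 1)² - E² (A - 1)(T - 1))`.
If `a = 0` or `t = 0` it equals `A (E - 1)² > 0`; otherwise `(A - 1)(T - 1) ≥ 1`, so it is negative.
The condition `a = 0 ∨ t = 0` says precisely that `min {k, v - k} = e`.
-/

theorem johnson_gap_eq {R : Type*} [CommRing R] (A E T : R) :
    (A * E - 1) ^ 2 - (A * E ^ 2 * T - 1) * (A - 1) =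
      A * ((E - 1) ^ 2 - E ^ 2 * ((A - 1) * (T - 1))) := by
  ring

theorem pow_add_two_mul_add {M : Type*} [CommMonoid M] (x : M) (a e t : ℕ) :
    x ^ (a + 2 * e + t) = x ^ a * (x ^ e) ^ 2 * x ^ t := by
  rw [pow_add, pow_add, pow_mul']

section OrderedField

variable {K : Type*} [Field K] [LinearOrder K] [IsStrictOrderedRing K]

theorem one_le_pow_sub_one {x : K} (hx : 2 ≤ x) {n : ℕ} (hn : n ≠ 0) : 1 ≤ x ^ n - 1 := by
  linarith [le_self_pow₀ (by linarith : (1 : K) ≤ x) hn]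

theorem johnson_gap_pos_iff {x : K} (hx : 2 ≤ x) {a e t : ℕ} (he : e ≠ 0) :
    0 < (x ^ (a + e) - 1) ^ 2 - (x ^ (a + 2 * e + t) - 1) * (x ^ a - 1) ↔ a = 0 ∨ t = 0 := by
  rw [pow_add, pow_add_two_mul_add, johnson_gap_eq, mul_pos_iff_of_pos_left (by positivity),
    sub_pos]
  have hE := one_le_pow_sub_one hx he
  constructor
  · contrapose!
    rintro ⟨ha, ht⟩
    have hA := one_le_pow_sub_one hx ha
    have hT := one_le_pow_sub_one hx ht
    calc (x ^ e - 1) ^ 2 ≤ (x ^ e) ^ 2 := by gcongr; linarith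
      _ = (x ^ e) ^ 2 * (1 * 1) := by ring
      _ ≤ (x ^ e) ^ 2 * ((x ^ a - 1) * (x ^ t - 1)) := by gcongr
  · rintro (rfl | rfl) <;> simpa using by positivity

theorem johnson_bound_eq {x : K} (hx : 2 ≤ x) {a e t : ℕ} (he : e ≠ 0) (hat : a = 0 ∨ t = 0) :
    (x ^ (a + e) - x ^ a) * (x ^ (a + 2 * e + t) - 1) /
        ((x ^ (a + e) - 1) ^ 2 - (x ^ (a + 2 * e + t) - 1) * (x ^ a - 1)) =
      (x ^ (a + 2 * e + t) - 1) / (x ^ e - 1) := by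
  have hdegenerate : (x ^ a - 1) * (x ^ t - 1) = 0 := by rcases hat with rfl | rfl <;> simp
  have hgap : (x ^ (a + e) - 1) ^ 2 - (x ^ (a + 2 * e + t) - 1) * (x ^ a - 1) =
      x ^ a * (x ^ e - 1) * (x ^ e - 1) := by
    rw [pow_add, pow_add_two_mul_add, johnson_gap_eq, hdegenerate]
    ring
  have hE : x ^ e - 1 ≠ 0 := (one_le_pow_sub_one hx he).trans_lt' one_pos |>.ne'
  rw [hgap, show x ^ (a + e) - x ^ a = x ^ a * (x ^ e - 1) by ring, mul_div_mul_left _ _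
    (mul_ne_zero (by positivity) hE)]

end OrderedField

theorem stmt1_general (q : ℕ) (hq : IsPrimePow q) (v k d : ℕ)
    (hd2 : 2 ∣ d) (hd : 2 ≤ d) (hdmin : d ≤ 2 * min k (v - k)) :
    (((q : ℚ) ^ k - 1) ^ 2 > ((q : ℚ) ^ v - 1) * ((q : ℚ) ^ (k - d / 2) - 1) ↔
      1 ≤ k ∧ d = 2 * min k (v - k)) ∧
    (1 ≤ k → d = 2 * min k (v - k) →
      ((q : ℚ) ^ k - (q : ℚ) ^ (k - d / 2)) * ((q : ℚ) ^ v - 1) /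
          (((q : ℚ) ^ k - 1) ^ 2 - ((q : ℚ) ^ v - 1) * ((q : ℚ) ^ (k - d / 2) - 1)) =
        ((q : ℚ) ^ v - 1) / ((q : ℚ) ^ min k (v - k) - 1)) := by
  obtain ⟨e, rfl⟩ := hd2
  obtain ⟨a, rfl⟩ : ∃ a, k = a + e := ⟨k - e, by omega⟩
  obtain ⟨t, rfl⟩ : ∃ t, v = a + 2 * e + t := ⟨v - (a + 2 * e), by omega⟩
  have he : e ≠ 0 := by omega
  have hq2 : (2 : ℚ) ≤ q := by exact_mod_cast hq.two_le
  rw [show a + e - 2 * e / 2 = a by omega]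
  refine ⟨?_, fun _ hmin => ?_⟩
  · rw [gt_iff_lt, ← sub_pos, johnson_gap_pos_iff hq2 he]
    omega
  · rw [show min (a + e) (a + 2 * e + t - (a + e)) = e by omega]
    exact johnson_bound_eq hq2 he (by omega)

/-- Proposition 1 (applicability of the Johnson type bound I): for a prime power `q` and
`0 ≤ k < v`, `d` even with `2 ≤ d ≤ 2 min{k, v-k}`, the condition
`(q^k-1)² > (q^v-1)(q^{k-d/2}-1)` holds iff `k ≥ 1` and `d = 2 min{k, v-k}`;
in that case the Johnson I bound simplifies to `(q^v-1)/(q^{min{k,v-k}}-1)`. -/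
theorem stmt1 (q : ℕ) (hq : IsPrimePow q) (v k d : ℕ) (hkv : k < v)
    (hd2 : 2 ∣ d) (hd : 2 ≤ d) (hdmin : d ≤ 2 * min k (v - k)) :
    (((q : ℚ) ^ k - 1) ^ 2 > ((q : ℚ) ^ v - 1) * ((q : ℚ) ^ (k - d / 2) - 1) ↔
      1 ≤ k ∧ d = 2 * min k (v - k)) ∧
    (1 ≤ k → d = 2 * min k (v - k) →
      ((q : ℚ) ^ k - (q : ℚ) ^ (k - d / 2)) * ((q : ℚ) ^ v - 1) /
          (((q : ℚ) ^ k - 1) ^ 2 - ((q : ℚ) ^ v - 1) * ((q : ℚ) ^ (k - d / 2) - 1)) =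
        ((q : ℚ) ^ v - 1) / ((q : ℚ) ^ min k (v - k) - 1)) :=
  stmt1_general q hq v k d hd2 hd hdmin
end

section
/- Let q be a prime power, d an even positive integer, and k, v₀, s, l integers with 1 ≤ k ≤ v₀, 2s ≥ d, d ≤ 2k, and l ≥ 0. Then A_q(v₀ + ls, d; k) ≥ A_q(v₀, d; k) · M(q,k,s+k,d)^l + A_q(s − d/2 + k, d; k) · Σ_{j=0}^{l−1} M(q,k,s+k,d)^j. -/
/-!
Write `d = 2δ`. Lifting a Gabidulin code of maps `F^k → F^s` of minimum rank distance `δ` over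
each subspace `U` of an optimal code in `F^v` gives the subspaces `{(u, A u) : u ∈ U}` of
`F^v × F^s`; two of them meet in dimension at most `k - δ`, since either their projections to
`F^v` are distinct codewords or they differ by a map of rank at least `δ`. All of them project
injectively to `F^v`, so they meet any subspace of `T × F^s`, with `dim T = k - δ`, in dimension
at most `k - δ`; adding an optimal code of `T × F^s ≅ F^(s - δ + k)` gives
`A_q(v + s) ≥ A_q(v) · M + A_q(s - δ + k)`, and iterating this `l` times gives the bound.
-/

open Finset Filter

/-- The subspace distance between two subspaces:
`d_S(U,W) = dim(U + W) - dim(U ∩ W)`. -/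
noncomputable def subDist {F : Type*} [Field F] {v : ℕ} (U W : Submodule F (Fin v → F)) : ℕ :=
  Module.finrank F ↥(U ⊔ W) - Module.finrank F ↥(U ⊓ W)

/-- `Aq F v d k` is the maximum size of a set of `k`-dimensional subspaces of `F^v`
whose pairwise subspace distances are at least `d`. -/
noncomputable def Aq (F : Type*) [Field F] [Fintype F] (v d k : ℕ) : ℕ :=
  sSup {n | ∃ C : Finset (Submodule F (Fin v → F)),
    (∀ U ∈ C, Module.finrank F ↥U = k) ∧
    (∀ U ∈ C, ∀ W ∈ C, U ≠ W → d ≤ subDist U W) ∧ C.card = n}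

/-- `M q k v d` is the size of a lifted MRD code in `F_q^v` with codeword dimension `k`
and (even) subspace distance `d`. -/
def M (q k v d : ℕ) : ℕ :=
  if d ≤ 2 * min k (v - k) then q ^ (max k (v - k) * (min k (v - k) - d / 2 + 1)) else 1

open Module

section SubspaceCode

variable {F V W : Type*} [Field F] [AddCommGroup V] [Module F V] [AddCommGroup W] [Module F W]

lemma Submodule.finrank_map_of_injective {f : V →ₗ[F] W} (hf : Function.Injective f)
    (p : Submodule F V) : finrank F (p.map f) = finrank F p :=
  (Submodule.equivMapOfInjective f hf p).finrank_eq.symm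

lemma Submodule.finrank_inf_le_of_disjoint_ker [FiniteDimensional F V] (f : V →ₗ[F] W)
    {X : Submodule F V} (hX : Disjoint (LinearMap.ker f) X) (Y : Submodule F V) :
    finrank F ↥(X ⊓ Y) ≤ finrank F ↥(X.map f ⊓ Y.map f) := by
  have hinj : Function.Injective (f.domRestrict (X ⊓ Y)) := by
    rw [← LinearMap.ker_eq_bot, Submodule.eq_bot_iff]
    rintro ⟨x, hxXY⟩ hx
    exact Subtype.ext (Submodule.disjoint_def.mp hX x hx hxXY.1)
  calc finrank F ↥(X ⊓ Y) = finrank F (LinearMap.range (f.domRestrict (X ⊓ Y))) :=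
        (LinearMap.finrank_range_of_inj hinj).symm
    _ = finrank F ↥((X ⊓ Y).map f) := by rw [LinearMap.range_domRestrict]
    _ ≤ finrank F ↥(X.map f ⊓ Y.map f) := Submodule.finrank_mono (Submodule.map_inf_le f)

/-- A constant-dimension code with minimum subspace distance `2 * δ`, stated through
intersections. -/
def IsSubspaceCode (C : Finset (Submodule F V)) (k δ : ℕ) : Prop :=
  (∀ U ∈ C, finrank F U = k) ∧ ∀ U ∈ C, ∀ W ∈ C, U ≠ W → finrank F ↥(U ⊓ W) + δ ≤ k

lemma isSubspaceCode_image {ι : Type*} [DecidableEq (Submodule F V)] {s : Finset ι}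
    {g : ι → Submodule F V} {k δ : ℕ} (hδ : 0 < δ) (hdim : ∀ i ∈ s, finrank F (g i) = k)
    (hinf : ∀ i ∈ s, ∀ j ∈ s, i ≠ j → finrank F ↥(g i ⊓ g j) + δ ≤ k) :
    IsSubspaceCode (s.image g) k δ ∧ (s.image g).card = s.card := by
  have hinj : Set.InjOn g s := by
    intro i hi j hj hij
    by_contra hne
    have := hinf i hi j hj hne
    rw [hij, inf_idem, hdim j hj] at this
    omega
  refine ⟨⟨?_, ?_⟩, Finset.card_image_of_injOn hinj⟩
  · simp only [Finset.mem_image]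
    rintro _ ⟨i, hi, rfl⟩
    exact hdim i hi
  · simp only [Finset.mem_image]
    rintro _ ⟨i, hi, rfl⟩ _ ⟨j, hj, rfl⟩ hne
    exact hinf i hi j hj (fun h => hne (congrArg g h))

lemma IsSubspaceCode.image_map [DecidableEq (Submodule F W)] {C : Finset (Submodule F V)}
    {k δ : ℕ} (hC : IsSubspaceCode C k δ) {f : V →ₗ[F] W} (hf : Function.Injective f) :
    IsSubspaceCode (C.image (Submodule.map f)) k δ ∧
      (C.image (Submodule.map f)).card = C.card := by
  refine ⟨⟨?_, ?_⟩, Finset.card_image_of_injective _ (Submodule.map_injective_of_injective hf)⟩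
  · simp only [Finset.mem_image]
    rintro _ ⟨U, hU, rfl⟩
    rw [Submodule.finrank_map_of_injective hf, hC.1 U hU]
  · simp only [Finset.mem_image]
    rintro _ ⟨U, hU, rfl⟩ _ ⟨U', hU', rfl⟩ hne
    rw [← Submodule.map_inf f hf, Submodule.finrank_map_of_injective hf]
    exact hC.2 U hU U' hU' (fun h => hne (congrArg _ h))

end SubspaceCode

section Aq

variable {F : Type*} [Field F] {v k δ : ℕ}

lemma two_mul_le_subDist_iff {U W : Submodule F (Fin v → F)} (hU : finrank F U = k)
    (hW : finrank F W = k) : 2 * δ ≤ subDist U W ↔ finrank F ↥(U ⊓ W) + δ ≤ k := by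
  have hsum := Submodule.finrank_sup_add_finrank_inf_eq U W
  have hinf : finrank F ↥(U ⊓ W) ≤ k := hU ▸ Submodule.finrank_mono inf_le_left
  rw [subDist]
  omega

variable [Fintype F]

lemma Aq_two_mul_eq_sSup : Aq F v (2 * δ) k =
    sSup {n | ∃ C : Finset (Submodule F (Fin v → F)), IsSubspaceCode C k δ ∧ C.card = n} := by
  refine congrArg sSup (Set.ext fun n => exists_congr fun C => ?_)
  refine ⟨fun ⟨hdim, hdist, hn⟩ => ⟨⟨hdim, fun U hU W hW hne => ?_⟩, hn⟩,
    fun ⟨⟨hdim, hinf⟩, hn⟩ => ⟨hdim, fun U hU W hW hne => ?_, hn⟩⟩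
  · exact (two_mul_le_subDist_iff (hdim U hU) (hdim W hW)).mp (hdist U hU W hW hne)
  · exact (two_mul_le_subDist_iff (hdim U hU) (hdim W hW)).mpr (hinf U hU W hW hne)

lemma bddAbove_card_isSubspaceCode : BddAbove
    {n | ∃ C : Finset (Submodule F (Fin v → F)), IsSubspaceCode C k δ ∧ C.card = n} := by
  have : Finite (Submodule F (Fin v → F)) := Finite.of_injective _ SetLike.coe_injective
  have : Fintype (Submodule F (Fin v → F)) := Fintype.ofFinite _
  refine ⟨Fintype.card (Submodule F (Fin v → F)), ?_⟩
  rintro _ ⟨C, -, rfl⟩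
  exact C.card_le_univ

variable {V : Type*} [AddCommGroup V] [Module F V] [FiniteDimensional F V] {w : ℕ}

lemma IsSubspaceCode.card_le_Aq (hV : finrank F V = w) {C : Finset (Submodule F V)}
    (hC : IsSubspaceCode C k δ) : C.card ≤ Aq F w (2 * δ) k := by
  classical
  let e := LinearEquiv.ofFinrankEq V (Fin w → F) (by rw [hV, finrank_fin_fun])
  obtain ⟨hCe, hcard⟩ := hC.image_map e.injective
  rw [← hcard, Aq_two_mul_eq_sSup]
  exact le_csSup bddAbove_card_isSubspaceCode ⟨_, hCe, rfl⟩

lemma exists_isSubspaceCode_card_eq_Aq (hV : finrank F V = w) :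
    ∃ C : Finset (Submodule F V), IsSubspaceCode C k δ ∧ C.card = Aq F w (2 * δ) k := by
  classical
  obtain ⟨C, hC, hcard⟩ : Aq F w (2 * δ) k ∈
      {n | ∃ C : Finset (Submodule F (Fin w → F)), IsSubspaceCode C k δ ∧ C.card = n} := by
    rw [Aq_two_mul_eq_sSup]
    exact Nat.sSup_mem ⟨0, ∅, by simp [IsSubspaceCode]⟩ bddAbove_card_isSubspaceCode
  let e := LinearEquiv.ofFinrankEq (Fin w → F) V (by rw [hV, finrank_fin_fun])
  obtain ⟨hCe, hcard'⟩ := hC.image_map e.injective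
  exact ⟨_, hCe, hcard'.trans hcard⟩

end Aq

section Frames

variable {F V₀ V₁ V₂ V₃ : Type*} [Field F] [AddCommGroup V₀] [Module F V₀]
  [AddCommGroup V₁] [Module F V₁] [AddCommGroup V₂] [Module F V₂] [AddCommGroup V₃] [Module F V₃]

lemma Submodule.exists_finrank_eq [FiniteDimensional F V₁] {a : ℕ} (ha : a ≤ finrank F V₁) :
    ∃ T : Submodule F V₁, finrank F T = a := by
  let b := Module.finBasis F V₁
  refine ⟨Submodule.span F (Set.range (b ∘ Fin.castLE ha)), ?_⟩
  rw [finrank_span_eq_card (b.linearIndependent.comp _ (Fin.castLE_injective ha)),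
    Fintype.card_fin]

namespace LinearMap

variable {f : V₀ →ₗ[F] V₁} (hf : Function.Injective f) (g g' : V₀ →ₗ[F] V₂)
include hf

lemma finrank_range_prod : finrank F (range (f.prod g)) = finrank F V₀ :=
  finrank_range_of_inj fun _ _ h => hf (congrArg Prod.fst h)

lemma disjoint_ker_fst_range_prod : Disjoint (ker (fst F V₁ V₂)) (range (f.prod g)) := by
  rw [Submodule.disjoint_def]
  rintro _ hx ⟨x, rfl⟩
  have hx0 : x = 0 := hf (by simpa using hx)
  simp [hx0]

lemma range_prod_inf_range_prod_le :
    range (f.prod g) ⊓ range (f.prod g') ≤ (ker (g - g')).map (f.prod g) := by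
  rintro _ ⟨⟨x, rfl⟩, ⟨x', hx'⟩⟩
  obtain rfl : x' = x := hf (congrArg Prod.fst hx')
  exact ⟨x', by simpa [sub_eq_zero] using (congrArg Prod.snd hx').symm, rfl⟩

end LinearMap

lemma LinearMap.prodMap_injective {f : V₀ →ₗ[F] V₁} {g : V₂ →ₗ[F] V₃} (hf : Function.Injective f)
    (hg : Function.Injective g) : Function.Injective (f.prodMap g) :=
  Prod.map_injective.mpr ⟨hf, hg⟩

lemma LinearMap.map_fst_range_prod (f : V₀ →ₗ[F] V₁) (g : V₀ →ₗ[F] V₂) :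
    (range (f.prod g)).map (fst F V₁ V₂) = range f := by
  rw [← range_comp, fst_prod]

variable [FiniteDimensional F V₁]

/-- A parametrisation of `U` by `F^k`; junk `0` when `finrank F U ≠ k`. -/
noncomputable def Submodule.frame (k : ℕ) (U : Submodule F V₁) : (Fin k → F) →ₗ[F] V₁ :=
  if h : finrank F U = k then
    U.subtype ∘ₗ (LinearEquiv.ofFinrankEq (Fin k → F) U (by rw [h, finrank_fin_fun])).toLinearMap
  else 0

lemma Submodule.frame_injective {k : ℕ} {U : Submodule F V₁} (h : finrank F U = k) :
    Function.Injective (U.frame k) := by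
  rw [frame, dif_pos h, LinearMap.coe_comp]
  exact U.injective_subtype.comp (LinearEquiv.injective _)

lemma Submodule.range_frame {k : ℕ} {U : Submodule F V₁} (h : finrank F U = k) :
    LinearMap.range (U.frame k) = U := by
  rw [frame, dif_pos h, LinearMap.range_comp, LinearEquiv.range, Submodule.map_top,
    Submodule.range_subtype]

end Frames

section Linkage

variable {F V₁ V₂ : Type*} [Field F] [AddCommGroup V₁] [Module F V₁] [AddCommGroup V₂]
  [Module F V₂] [FiniteDimensional F V₁] {k δ : ℕ}

open LinearMap in
noncomputable def linkageFamily (k : ℕ) (T : Submodule F V₁) :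
    (Submodule F V₁ × ((Fin k → F) →ₗ[F] V₂)) ⊕ Submodule F (T × V₂) →
      Submodule F (V₁ × V₂) :=
  Sum.elim (fun p => range ((p.1.frame k).prod p.2)) (Submodule.map (T.subtype.prodMap id))

variable {T : Submodule F V₁}

lemma linkageFamily_inl (U : Submodule F V₁) (A : (Fin k → F) →ₗ[F] V₂) :
    linkageFamily k T (.inl (U, A)) = LinearMap.range ((U.frame k).prod A) := rfl

lemma linkageFamily_inr (W : Submodule F (T × V₂)) :
    linkageFamily k T (.inr W) = W.map (T.subtype.prodMap LinearMap.id) := rfl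

lemma finrank_linkageFamily_inl {U : Submodule F V₁} (hU : finrank F U = k)
    (A : (Fin k → F) →ₗ[F] V₂) : finrank F (linkageFamily k T (.inl (U, A))) = k := by
  rw [linkageFamily_inl, LinearMap.finrank_range_prod (U.frame_injective hU),
    finrank_fin_fun]

lemma finrank_linkageFamily_inr (W : Submodule F (T × V₂)) :
    finrank F (linkageFamily k T (.inr W)) = finrank F W := by
  rw [linkageFamily_inr]
  exact Submodule.finrank_map_of_injective
    (LinearMap.prodMap_injective T.injective_subtype Function.injective_id) W

lemma finrank_linkageFamily_inl_inf_inl_same_le {U : Submodule F V₁} (hU : finrank F U = k)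
    (A A' : (Fin k → F) →ₗ[F] V₂) :
    finrank F ↥(linkageFamily k T (.inl (U, A)) ⊓ linkageFamily k T (.inl (U, A'))) ≤
      finrank F (LinearMap.ker (A - A')) :=
  (Submodule.finrank_mono
    (LinearMap.range_prod_inf_range_prod_le (U.frame_injective hU) A A')).trans
    (Submodule.finrank_map_le _ _)

lemma finrank_linkageFamily_inr_inf_inr (W W' : Submodule F (T × V₂)) :
    finrank F ↥(linkageFamily k T (.inr W) ⊓ linkageFamily k T (.inr W')) =
      finrank F ↥(W ⊓ W') := by
  have hinj : Function.Injective (T.subtype.prodMap (LinearMap.id : V₂ →ₗ[F] V₂)) :=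
    LinearMap.prodMap_injective T.injective_subtype Function.injective_id
  rw [linkageFamily_inr, linkageFamily_inr, ← Submodule.map_inf _ hinj,
    Submodule.finrank_map_of_injective hinj]

variable [FiniteDimensional F V₂]

lemma finrank_linkageFamily_inl_inf_inr_le {U : Submodule F V₁} (hU : finrank F U = k)
    (A : (Fin k → F) →ₗ[F] V₂) (W : Submodule F (T × V₂)) :
    finrank F ↥(linkageFamily k T (.inl (U, A)) ⊓ linkageFamily k T (.inr W)) ≤ finrank F T := by
  have hfst : (linkageFamily k T (.inr W)).map (LinearMap.fst F V₁ V₂) ≤ T := by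
    rintro _ ⟨_, ⟨w, -, rfl⟩, rfl⟩
    exact (w.1).2
  calc _ ≤ finrank F ↥((linkageFamily k T (.inl (U, A))).map (LinearMap.fst F V₁ V₂) ⊓
        (linkageFamily k T (.inr W)).map (LinearMap.fst F V₁ V₂)) :=
        Submodule.finrank_inf_le_of_disjoint_ker _
          (LinearMap.disjoint_ker_fst_range_prod (U.frame_injective hU) A) _
    _ ≤ finrank F T := Submodule.finrank_mono (inf_le_right.trans hfst)

lemma finrank_linkageFamily_inl_inf_inl_le {U U' : Submodule F V₁} (hU : finrank F U = k)
    (hU' : finrank F U' = k) (A A' : (Fin k → F) →ₗ[F] V₂) :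
    finrank F ↥(linkageFamily k T (.inl (U, A)) ⊓ linkageFamily k T (.inl (U', A'))) ≤
      finrank F ↥(U ⊓ U') := by
  have hfst : (linkageFamily k T (.inl (U, A))).map (LinearMap.fst F V₁ V₂) ⊓
      (linkageFamily k T (.inl (U', A'))).map (LinearMap.fst F V₁ V₂) = U ⊓ U' := by
    rw [linkageFamily_inl, linkageFamily_inl, LinearMap.map_fst_range_prod,
      LinearMap.map_fst_range_prod, U.range_frame hU, U'.range_frame hU']
  calc _ ≤ finrank F ↥((linkageFamily k T (.inl (U, A))).map (LinearMap.fst F V₁ V₂) ⊓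
        (linkageFamily k T (.inl (U', A'))).map (LinearMap.fst F V₁ V₂)) :=
        Submodule.finrank_inf_le_of_disjoint_ker _
          (LinearMap.disjoint_ker_fst_range_prod (U.frame_injective hU) A) _
    _ = finrank F ↥(U ⊓ U') := by rw [hfst]

variable {C₁ : Finset (Submodule F V₁)} {𝓐 : Finset ((Fin k → F) →ₗ[F] V₂)}
  {C₂ : Finset (Submodule F (T × V₂))}

lemma finrank_linkageFamily_inf_add_le (hC₁ : IsSubspaceCode C₁ k δ)
    (h𝓐 : ∀ A ∈ 𝓐, ∀ A' ∈ 𝓐, A ≠ A' → finrank F (LinearMap.ker (A - A')) + δ ≤ k)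
    (hT : finrank F T + δ ≤ k) (hC₂ : IsSubspaceCode C₂ k δ) :
    ∀ i ∈ (C₁ ×ˢ 𝓐).disjSum C₂, ∀ j ∈ (C₁ ×ˢ 𝓐).disjSum C₂, i ≠ j →
      finrank F ↥(linkageFamily k T i ⊓ linkageFamily k T j) + δ ≤ k := by
  rintro (⟨U, A⟩ | W) hi (⟨U', A'⟩ | W') hj hij <;>
    simp only [Finset.inl_mem_disjSum, Finset.inr_mem_disjSum, Finset.mem_product] at hi hj
  · by_cases hUU : U = U'
    · subst hUU
      have hAA : A ≠ A' := fun h => hij (by rw [h])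
      have := finrank_linkageFamily_inl_inf_inl_same_le (T := T) (hC₁.1 U hi.1) A A'
      have := h𝓐 A hi.2 A' hj.2 hAA
      omega
    · have := finrank_linkageFamily_inl_inf_inl_le (T := T) (hC₁.1 U hi.1) (hC₁.1 U' hj.1) A A'
      have := hC₁.2 U hi.1 U' hj.1 hUU
      omega
  · have := finrank_linkageFamily_inl_inf_inr_le (hC₁.1 U hi.1) A W'
    omega
  · have := finrank_linkageFamily_inl_inf_inr_le (hC₁.1 U' hj.1) A' W
    rw [inf_comm] at this
    omega
  · rw [finrank_linkageFamily_inr_inf_inr]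
    exact hC₂.2 W hi W' hj (fun h => hij (by rw [h]))

theorem exists_isSubspaceCode_linkage (hδ : 0 < δ) (hC₁ : IsSubspaceCode C₁ k δ)
    (h𝓐 : ∀ A ∈ 𝓐, ∀ A' ∈ 𝓐, A ≠ A' → finrank F (LinearMap.ker (A - A')) + δ ≤ k)
    (hT : finrank F T + δ ≤ k) (hC₂ : IsSubspaceCode C₂ k δ) :
    ∃ C : Finset (Submodule F (V₁ × V₂)),
      IsSubspaceCode C k δ ∧ C.card = C₁.card * 𝓐.card + C₂.card := by
  classical
  have hdim : ∀ i ∈ (C₁ ×ˢ 𝓐).disjSum C₂, finrank F (linkageFamily k T i) = k := by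
    rintro (⟨U, A⟩ | W) hi <;>
      simp only [Finset.inl_mem_disjSum, Finset.inr_mem_disjSum, Finset.mem_product] at hi
    · exact finrank_linkageFamily_inl (hC₁.1 U hi.1) A
    · rw [finrank_linkageFamily_inr, hC₂.1 W hi]
  obtain ⟨hC, hcard⟩ :=
    isSubspaceCode_image hδ hdim (finrank_linkageFamily_inf_add_le hC₁ h𝓐 hT hC₂)
  exact ⟨_, hC, by rw [hcard, Finset.card_disjSum, Finset.card_product]⟩

end Linkage

section Gabidulin

open Polynomial

variable (F : Type*) {E : Type*} [Field F] [Fintype F] [Field E] [Algebra F E]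

noncomputable def gabidulinMap {t : ℕ} (a : Fin t → E) : E →ₗ[F] E :=
  ∑ i, a i • (FiniteField.frobeniusAlgHom F E ^ (i : ℕ)).toLinearMap

variable {F} {t : ℕ}

lemma gabidulinMap_apply (a : Fin t → E) (x : E) :
    gabidulinMap F a x = ∑ i, a i * x ^ Fintype.card F ^ (i : ℕ) := by
  simp [gabidulinMap, LinearMap.sum_apply, AlgHom.coe_pow, FiniteField.coe_frobeniusAlgHom,
    pow_iterate]

lemma gabidulinMap_sub (a b : Fin t → E) :
    gabidulinMap F (a - b) = gabidulinMap F a - gabidulinMap F b := by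
  ext x
  simp only [LinearMap.sub_apply, gabidulinMap_apply, Pi.sub_apply, sub_mul,
    Finset.sum_sub_distrib]

lemma finrank_ker_gabidulinMap_lt [Finite E] {a : Fin t → E} (ha : a ≠ 0) :
    finrank F (LinearMap.ker (gabidulinMap F a)) < t := by
  classical
  set q := Fintype.card F
  have hq : 1 < q := Fintype.one_lt_card
  obtain ⟨i₀, hi₀⟩ := Function.ne_iff.mp ha
  let P : E[X] := ∑ i, C (a i) * X ^ q ^ (i : ℕ)
  have hcoeff : P.coeff (q ^ (i₀ : ℕ)) = a i₀ := by
    rw [finsetSum_coeff, Finset.sum_eq_single i₀ (fun j _ hj => ?_) (by simp)]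
    · simp
    · rw [coeff_C_mul_X_pow, if_neg fun h => hj (Fin.ext (Nat.pow_right_injective hq h).symm)]
  have hP : P ≠ 0 := fun h => hi₀ (by rw [← hcoeff, h, coeff_zero, Pi.zero_apply])
  have hdeg : P.natDegree ≤ q ^ (t - 1) :=
    natDegree_sum_le_of_forall_le _ _ fun i _ => (natDegree_C_mul_X_pow_le _ _).trans
      (Nat.pow_le_pow_right hq.le (by omega))
  have hroot : ∀ x ∈ LinearMap.ker (gabidulinMap F a), x ∈ P.roots.toFinset := by
    intro x hx
    rw [LinearMap.mem_ker, gabidulinMap_apply] at hx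
    simpa [mem_roots hP, P, eval_finsetSum] using hx
  have hcard : q ^ finrank F (LinearMap.ker (gabidulinMap F a)) ≤ q ^ (t - 1) :=
    calc q ^ finrank F (LinearMap.ker (gabidulinMap F a))
        = Nat.card (LinearMap.ker (gabidulinMap F a)) := by
          rw [Module.natCard_eq_pow_finrank (K := F), Nat.card_eq_fintype_card]
      _ ≤ Nat.card P.roots.toFinset :=
          Nat.card_le_card_of_injective (fun x => ⟨x, hroot x x.2⟩)
            fun _ _ h => Subtype.ext (by simpa using h)
      _ ≤ P.natDegree := by
          rw [Nat.card_eq_finsetCard]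
          exact (Multiset.toFinset_card_le _).trans (card_roots' P)
      _ ≤ q ^ (t - 1) := hdeg
  have := (Nat.pow_le_pow_iff_right hq).mp hcard
  have := i₀.pos
  omega

lemma exists_gabidulin_code [Finite E] {δ : ℕ} (hδ : 0 < δ) (W : Submodule F E)
    (hδW : δ ≤ finrank F W) :
    ∃ 𝓐 : Finset (W →ₗ[F] E), 𝓐.card = Nat.card E ^ (finrank F W - δ + 1) ∧
      ∀ f ∈ 𝓐, ∀ g ∈ 𝓐, f ≠ g → δ ≤ finrank F (LinearMap.range (f - g)) := by
  classical
  have : Fintype E := Fintype.ofFinite E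
  let codeword : (Fin (finrank F W - δ + 1) → E) → (W →ₗ[F] E) :=
    fun a => gabidulinMap F a ∘ₗ W.subtype
  have hrank (a) (ha : a ≠ 0) : δ ≤ finrank F (LinearMap.range (codeword a)) := by
    have hker : finrank F (LinearMap.ker (codeword a)) ≤
        finrank F (LinearMap.ker (gabidulinMap F a)) := by
      rw [← Submodule.finrank_map_subtype_eq, LinearMap.ker_comp]
      exact Submodule.finrank_mono (Submodule.map_comap_le _ _)
    have := LinearMap.finrank_range_add_finrank_ker (codeword a)
    have := finrank_ker_gabidulinMap_lt (F := F) ha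
    omega
  have hsub (a b) : codeword a - codeword b = codeword (a - b) := by
    simp only [codeword, gabidulinMap_sub, LinearMap.sub_comp]
  have hinj : Function.Injective codeword := by
    intro a b h
    by_contra hne
    have := hrank (a - b) (sub_ne_zero.mpr hne)
    rw [← hsub, h, sub_self, LinearMap.range_zero, finrank_bot] at this
    omega
  refine ⟨Finset.univ.image codeword, ?_, ?_⟩
  · rw [Finset.card_image_of_injective _ hinj, Finset.card_univ, Fintype.card_fun,
      Fintype.card_fin, Nat.card_eq_fintype_card]
  · simp only [Finset.mem_image, Finset.mem_univ, true_and]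
    rintro _ ⟨a, rfl⟩ _ ⟨b, rfl⟩ hne
    rw [hsub]
    exact hrank _ (sub_ne_zero.mpr fun h => hne (h ▸ rfl))

end Gabidulin

section RankMetric

lemma FiniteField.exists_finrank_eq (F : Type*) [Field F] [Finite F] {m : ℕ} (hm : m ≠ 0) :
    ∃ (E : Type) (_ : Field E) (_ : Algebra F E), Finite E ∧ finrank F E = m := by
  obtain ⟨p, _⟩ := CharP.exists F
  have : Fact p.Prime := ⟨CharP.char_is_prime F p⟩
  have : NeZero m := ⟨hm⟩
  exact ⟨FiniteField.Extension F p m, inferInstance, inferInstance, inferInstance,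
    FiniteField.finrank_extension F p m⟩

variable {F : Type*} [Field F] [Fintype F] {m n k s δ : ℕ}

lemma exists_rank_metric_code_of_le (hδ : 0 < δ) (hδn : δ ≤ n) (hnm : n ≤ m) :
    ∃ 𝓐 : Finset (Matrix (Fin m) (Fin n) F), 𝓐.card = Fintype.card F ^ (m * (n - δ + 1)) ∧
      ∀ A ∈ 𝓐, ∀ B ∈ 𝓐, A ≠ B → δ ≤ (A - B).rank := by
  classical
  obtain ⟨E, _, _, _, hE⟩ := FiniteField.exists_finrank_eq F (m := m) (by omega)
  obtain ⟨W, hW⟩ := Submodule.exists_finrank_eq (V₁ := E) (F := F) (a := n) (by omega)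
  obtain ⟨𝓐, hcard, hdist⟩ := exists_gabidulin_code hδ W (by omega)
  let bW := Module.finBasisOfFinrankEq F W hW
  let bE := Module.finBasisOfFinrankEq F E hE
  refine ⟨𝓐.image (LinearMap.toMatrix bW bE), ?_, ?_⟩
  · rw [Finset.card_image_of_injective _ (LinearMap.toMatrix bW bE).injective, hcard, hW,
      Module.natCard_eq_pow_finrank (K := F), hE, Nat.card_eq_fintype_card, ← pow_mul]
  · simp only [Finset.mem_image]
    rintro _ ⟨f, hf, rfl⟩ _ ⟨g, hg, rfl⟩ hne
    rw [← map_sub, Matrix.rank_eq_finrank_range_toLin _ bE bW, Matrix.toLin_toMatrix]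
    exact hdist f hf g hg (fun h => hne (h ▸ rfl))

lemma exists_rank_metric_code (hδ : 0 < δ) (hδk : δ ≤ k) (hδs : δ ≤ s) :
    ∃ 𝓐 : Finset (Matrix (Fin s) (Fin k) F),
      𝓐.card = Fintype.card F ^ (max k s * (min k s - δ + 1)) ∧
      ∀ A ∈ 𝓐, ∀ B ∈ 𝓐, A ≠ B → δ ≤ (A - B).rank := by
  classical
  rcases le_total k s with hks | hsk
  · rw [max_eq_right hks, min_eq_left hks]
    exact exists_rank_metric_code_of_le hδ hδk hks
  · obtain ⟨𝓐, hcard, hdist⟩ := exists_rank_metric_code_of_le (F := F) hδ hδs hsk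
    refine ⟨𝓐.image Matrix.transpose, ?_, ?_⟩
    · rw [Finset.card_image_of_injective _ Matrix.transpose_injective, hcard, max_eq_left hsk,
        min_eq_right hsk]
    · simp only [Finset.mem_image]
      rintro _ ⟨A, hA, rfl⟩ _ ⟨B, hB, rfl⟩ hne
      rw [← Matrix.transpose_sub, Matrix.rank_transpose]
      exact hdist A hA B hB (fun h => hne (h ▸ rfl))

lemma exists_linearMap_rank_metric_code (hδ : 0 < δ) (hδk : δ ≤ k) (hδs : δ ≤ s) :
    ∃ 𝓐 : Finset ((Fin k → F) →ₗ[F] (Fin s → F)),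
      𝓐.card = Fintype.card F ^ (max k s * (min k s - δ + 1)) ∧
      ∀ A ∈ 𝓐, ∀ B ∈ 𝓐, A ≠ B → finrank F (LinearMap.ker (A - B)) + δ ≤ k := by
  classical
  obtain ⟨𝓐, hcard, hdist⟩ := exists_rank_metric_code (F := F) hδ hδk hδs
  refine ⟨𝓐.image Matrix.toLin',
    by rw [Finset.card_image_of_injective _ Matrix.toLin'.injective, hcard], ?_⟩
  simp only [Finset.mem_image]
  rintro _ ⟨A, hA, rfl⟩ _ ⟨B, hB, rfl⟩ hne
  have hrank := hdist A hA B hB (fun h => hne (h ▸ rfl))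
  have := LinearMap.finrank_range_add_finrank_ker (Matrix.toLin' (A - B))
  rw [Matrix.rank, ← Matrix.toLin'_apply', map_sub] at hrank
  rw [finrank_fin_fun, map_sub] at this
  omega

end RankMetric

section Recursion

variable {F : Type*} [Field F] [Fintype F] {k δ v s : ℕ}

theorem Aq_mul_add_Aq_le_Aq_add (hδ : 0 < δ) (hδk : δ ≤ k) (hδs : δ ≤ s) (hkv : k ≤ v) :
    Aq F v (2 * δ) k * Fintype.card F ^ (max k s * (min k s - δ + 1)) +
      Aq F (s - δ + k) (2 * δ) k ≤ Aq F (v + s) (2 * δ) k := by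
  obtain ⟨C₁, hC₁, hC₁card⟩ := exists_isSubspaceCode_card_eq_Aq (k := k) (δ := δ)
    (finrank_fin_fun F (n := v))
  obtain ⟨T, hT⟩ := Submodule.exists_finrank_eq (F := F) (V₁ := Fin v → F) (a := k - δ)
    (by rw [finrank_fin_fun]; omega)
  obtain ⟨C₂, hC₂, hC₂card⟩ := exists_isSubspaceCode_card_eq_Aq (F := F)
    (V := T × (Fin s → F)) (k := k) (δ := δ) (w := s - δ + k)
    (by rw [finrank_prod, hT, finrank_fin_fun]; omega)
  obtain ⟨𝓐, h𝓐card, h𝓐⟩ := exists_linearMap_rank_metric_code (F := F) hδ hδk hδs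
  obtain ⟨C, hC, hCcard⟩ := exists_isSubspaceCode_linkage hδ hC₁ h𝓐 (by omega) hC₂
  calc _ = C.card := by rw [hCcard, hC₁card, h𝓐card, hC₂card]
    _ ≤ Aq F (v + s) (2 * δ) k :=
        hC.card_le_Aq (by rw [finrank_prod, finrank_fin_fun, finrank_fin_fun])

end Recursion

lemma mul_pow_add_mul_geom_sum_le {a : ℕ → ℕ} {m b : ℕ} (h : ∀ l, a l * m + b ≤ a (l + 1))
    (l : ℕ) :
    a 0 * m ^ l + b * ∑ j ∈ Finset.range l, m ^ j ≤ a l := by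
  induction l with
  | zero => simp
  | succ l ih =>
    calc a 0 * m ^ (l + 1) + b * ∑ j ∈ Finset.range (l + 1), m ^ j
        = (a 0 * m ^ l + b * ∑ j ∈ Finset.range l, m ^ j) * m + b := by
          rw [geom_sum_succ]; ring
      _ ≤ a l * m + b := by gcongr
      _ ≤ a (l + 1) := h l

theorem stmt9_general (q : ℕ) (F : Type) [Field F] [Fintype F] (hF : Fintype.card F = q)
    (k d v₀ s l : ℕ) (hd0 : 0 < d) (hd2 : 2 ∣ d)
    (hkv : k ≤ v₀) (hs : d ≤ 2 * s) (hdk : d ≤ 2 * k) :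
    Aq F v₀ d k * (M q k (s + k) d) ^ l +
        Aq F (s - d / 2 + k) d k * ∑ j ∈ Finset.range l, (M q k (s + k) d) ^ j ≤
      Aq F (v₀ + l * s) d k := by
  obtain ⟨δ, rfl⟩ := hd2
  have hδ : 2 * δ / 2 = δ := by omega
  have hM : M q k (s + k) (2 * δ) = q ^ (max k s * (min k s - δ + 1)) := by
    rw [M, Nat.add_sub_cancel, if_pos (by omega), hδ]
  rw [hM, hδ]
  have hstep (l : ℕ) : Aq F (v₀ + l * s) (2 * δ) k * q ^ (max k s * (min k s - δ + 1)) +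
      Aq F (s - δ + k) (2 * δ) k ≤ Aq F (v₀ + (l + 1) * s) (2 * δ) k := by
    rw [add_mul, one_mul, ← add_assoc, ← hF]
    exact Aq_mul_add_Aq_le_Aq_add (by omega) (by omega) (by omega) (by omega)
  simpa using mul_pow_add_mul_geom_sum_le hstep l

/-- Proposition (first arithmetic-progression bound): for `1 ≤ k ≤ v₀`, `2s ≥ d`, `d ≤ 2k`,
and `l ≥ 0`,
`A_q(v₀+ls,d;k) ≥ A_q(v₀,d;k) · M(q,k,s+k,d)^l + A_q(s-d/2+k,d;k) · ∑_{j=0}^{l-1} M(q,k,s+k,d)^j`. -/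
theorem stmt9 (q : ℕ) (F : Type) [Field F] [Fintype F] (hF : Fintype.card F = q)
    (k d v₀ s l : ℕ) (hd0 : 0 < d) (hd2 : 2 ∣ d)
    (hk : 1 ≤ k) (hkv : k ≤ v₀) (hs : d ≤ 2 * s) (hdk : d ≤ 2 * k) :
    Aq F v₀ d k * (M q k (s + k) d) ^ l +
        Aq F (s - d / 2 + k) d k * ∑ j ∈ Finset.range l, (M q k (s + k) d) ^ j ≤
      Aq F (v₀ + l * s) d k :=
  stmt9_general q F hF k d v₀ s l hd0 hd2 hkv hs hdk
end

section
/- Let q ≥ 2 be an integer and b ≥ 0 an integer. Then the limit as a → ∞ (over natural numbers a) of [a+b, b]_q / q^{ab} equals ∏_{i=1}^{b} (1 − q^{−i})^{−1} = 1/(1/q; 1/q)_b, where the quotient is taken in the real numbers. -/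
open Finset Filter

/-- The Gaussian binomial coefficient `[n, b]_q = ∏_{i=1}^{b} (q^{n-b+i}-1)/(q^i-1)`
for `0 ≤ b ≤ n`, and `0` whenever `b > n`, as a real number. -/
noncomputable def gaussR (q n b : ℕ) : ℝ :=
  if b ≤ n then ∏ i ∈ Finset.range b, ((q : ℝ) ^ (n - b + (i + 1)) - 1) / ((q : ℝ) ^ (i + 1) - 1)
  else 0

/-!
Dividing the `i`-th factor `(q^{a+i} - 1)/(q^i - 1)` of `[a+b, b]_q` by `q^a` turns it into
`(1 - q^{-(a+i)})/(1 - q^{-i})`, and `q^{-(a+i)} → 0` as `a → ∞`.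
-/

lemma pow_add_sub_one_div_div_pow {K : Type*} [Field K] {x : K} (hx : x ≠ 0) (a n : ℕ) :
    (x ^ (a + n) - 1) / (x ^ n - 1) / x ^ a = (1 - x⁻¹ ^ (a + n)) / (1 - x⁻¹ ^ n) := by
  rw [inv_pow, inv_pow]
  by_cases hn : x ^ n = 1
  · simp [hn]
  · have hn' : x ^ n - 1 ≠ 0 := sub_ne_zero.mpr hn
    have hn'' : 1 - (x ^ n)⁻¹ ≠ 0 := by
      rwa [sub_ne_zero, ne_comm, Ne, inv_eq_one]
    rw [pow_add]
    field_simp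

lemma gaussR_add_div_pow {q : ℕ} (hq : q ≠ 0) (a b : ℕ) :
    gaussR q (a + b) b / (q : ℝ) ^ (a * b) =
      ∏ i ∈ range b, (1 - (q : ℝ)⁻¹ ^ (a + (i + 1))) / (1 - (q : ℝ)⁻¹ ^ (i + 1)) := by
  rw [gaussR, if_pos (Nat.le_add_left b a), Nat.add_sub_cancel, pow_mul, ← card_range b,
    ← prod_const, card_range, ← prod_div_distrib]
  exact prod_congr rfl fun i _ => pow_add_sub_one_div_div_pow (Nat.cast_ne_zero.mpr hq) a (i + 1)

lemma tendsto_prod_one_sub_pow_add_div {K : Type*} [NormedField K] {r : K} (hr : ‖r‖ < 1)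
    (b : ℕ) :
    Tendsto (fun a : ℕ => ∏ i ∈ range b, (1 - r ^ (a + (i + 1))) / (1 - r ^ (i + 1))) atTop
      (nhds (∏ i ∈ range b, (1 - r ^ (i + 1))⁻¹)) := by
  refine tendsto_finsetProd _ fun i _ => ?_
  have hpow : Tendsto (fun a : ℕ => r ^ (a + (i + 1))) atTop (nhds 0) :=
    (tendsto_pow_atTop_nhds_zero_of_norm_lt_one hr).comp (tendsto_add_atTop_nat (i + 1))
  simpa [div_eq_mul_inv] using
    ((tendsto_const_nhds (x := (1 : K))).sub hpow).div_const (1 - r ^ (i + 1))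

/-- Lemma (limit of normalized Gaussian binomial coefficients): for an integer `q ≥ 2` and
`b ≥ 0`, `lim_{a→∞} [a+b, b]_q / q^{ab} = ∏_{i=1}^{b} (1 - q^{-i})^{-1} = 1/(1/q;1/q)_b`. -/
theorem stmt13 (q b : ℕ) (hq : 2 ≤ q) :
    Filter.Tendsto (fun a : ℕ => gaussR q (a + b) b / (q : ℝ) ^ (a * b)) Filter.atTop
      (nhds (∏ i ∈ Finset.range b, (1 - ((q : ℝ))⁻¹ ^ (i + 1))⁻¹)) ∧
    (∏ i ∈ Finset.range b, (1 - ((q : ℝ))⁻¹ ^ (i + 1))⁻¹) =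
      (∏ i ∈ Finset.range b, (1 - ((q : ℝ))⁻¹ ^ (i + 1)))⁻¹ := by
  have hq1 : (1 : ℝ) < q := by exact_mod_cast hq
  have hr : ‖(q : ℝ)⁻¹‖ < 1 := by
    rw [norm_inv, Real.norm_natCast]; exact inv_lt_one_of_one_lt₀ hq1
  refine ⟨?_, prod_inv_distrib _⟩
  simp only [gaussR_add_div_pow (by omega : q ≠ 0)]
  exact tendsto_prod_one_sub_pow_add_div hr b
end

section
/- Let q ≥ 2 be an integer and z ≥ 1 an integer. Define g(s) = q^{sz} / [s+z, z]_q as a real number for integers s ≥ 0. Then g is strictly monotonically decreasing in s, and g(s) converges as s → ∞ to (1/q; 1/q)_z = ∏_{i=1}^{z}(1 − q^{−i}); moreover this limit is greater than 0.288788. (Interpretation: with z = k − d/2 + 1 and s = v − k, g(s) is the size q^{(v−k)(k−d/2+1)} of a lifted MRD code divided by the Singleton bound [v−d/2+1, v−k]_q, for k ≤ v−k.) -/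
/-!
With `x = 1/q`, each factor `q^s (q^{i+1} - 1)/(q^{s+i+1} - 1)` of `q^{sz}/[s+z, z]_q` equals
`(1 - x^{i+1})/(1 - x^{s+i+1})`, so `g(s) = (x; x)_z / (x^{s+1}; x)_z`. The denominator increases
strictly to `1` as `s → ∞`. The limit `(x; x)_z` decreases in `x` and in `z`, so it suffices to
bound it at `x = 1/2`: the Weierstrass product inequality shows that the factors beyond the 25th
contribute at least `1 - 2^{-25}`, and the first 25 factors are evaluated numerically.
-/

open Finset Filter

theorem Finset.one_sub_sum_le_prod_one_sub {ι R : Type*} [CommRing R] [LinearOrder R]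
    [IsStrictOrderedRing R] (s : Finset ι) {f : ι → R} (h0 : ∀ i ∈ s, 0 ≤ f i)
    (h1 : ∀ i ∈ s, f i ≤ 1) : 1 - ∑ i ∈ s, f i ≤ ∏ i ∈ s, (1 - f i) := by
  classical
  induction s using Finset.induction_on with
  | empty => simp
  | insert a s ha ih =>
    rw [prod_insert ha, sum_insert ha]
    have hs : 0 ≤ ∑ i ∈ s, f i := sum_nonneg fun i hi => h0 i (mem_insert_of_mem hi)
    have ih := ih (fun i hi => h0 i (mem_insert_of_mem hi)) fun i hi => h1 i (mem_insert_of_mem hi)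
    nlinarith [h0 a (mem_insert_self a s), h1 a (mem_insert_self a s)]

/-- The `q`-Pochhammer symbol `(x^{s+1}; x)_z = ∏_{i<z} (1 - x^{s+i+1})`. -/
noncomputable def shiftedQPoch (x : ℝ) (s z : ℕ) : ℝ :=
  ∏ i ∈ range z, (1 - x ^ (s + i + 1))

section shiftedQPoch

variable {x : ℝ} (s z : ℕ)

theorem shiftedQPoch_zero_left :
    shiftedQPoch x 0 z = ∏ i ∈ range z, (1 - x ^ (i + 1)) := by
  simp only [shiftedQPoch, zero_add]

theorem shiftedQPoch_add (m n : ℕ) :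
    shiftedQPoch x s (m + n) = shiftedQPoch x s m * shiftedQPoch x (s + m) n := by
  simp only [shiftedQPoch, prod_range_add, add_assoc]

theorem one_sub_pow_succ_pos (hx0 : 0 ≤ x) (hx1 : x < 1) (n : ℕ) : 0 < 1 - x ^ (n + 1) :=
  sub_pos.2 (pow_lt_one₀ hx0 hx1 n.succ_ne_zero)

theorem shiftedQPoch_pos (hx0 : 0 ≤ x) (hx1 : x < 1) : 0 < shiftedQPoch x s z :=
  prod_pos fun _ _ => one_sub_pow_succ_pos hx0 hx1 _

theorem shiftedQPoch_le_one (hx0 : 0 ≤ x) (hx1 : x < 1) : shiftedQPoch x s z ≤ 1 :=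
  prod_le_one (fun _ _ => (one_sub_pow_succ_pos hx0 hx1 _).le)
    fun _ _ => sub_le_self _ (pow_nonneg hx0 _)

theorem shiftedQPoch_le_of_le_length (hx0 : 0 ≤ x) (hx1 : x < 1) {m n : ℕ} (hmn : m ≤ n) :
    shiftedQPoch x s n ≤ shiftedQPoch x s m := by
  obtain ⟨k, rfl⟩ := Nat.exists_eq_add_of_le hmn
  rw [shiftedQPoch_add]
  exact mul_le_of_le_one_right (shiftedQPoch_pos s m hx0 hx1).le
    (shiftedQPoch_le_one _ k hx0 hx1)

theorem shiftedQPoch_strictMono (hx0 : 0 < x) (hx1 : x < 1) (hz : z ≠ 0) :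
    StrictMono fun s => shiftedQPoch x s z := by
  intro s t hst
  refine prod_lt_prod_of_nonempty (fun _ _ => one_sub_pow_succ_pos hx0.le hx1 _)
    (fun i _ => ?_) (nonempty_range_iff.2 hz)
  exact sub_lt_sub_left (pow_lt_pow_right_of_lt_one₀ hx0 hx1 (by omega)) 1

theorem tendsto_shiftedQPoch (hx0 : 0 ≤ x) (hx1 : x < 1) :
    Tendsto (fun s => shiftedQPoch x s z) atTop (nhds 1) := by
  rw [← prod_const_one (s := range z)]
  refine tendsto_finsetProd _ fun i _ => ?_
  have hpow : Tendsto (fun s => x ^ s * x ^ (i + 1)) atTop (nhds 0) := by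
    simpa using (tendsto_pow_atTop_nhds_zero_of_lt_one hx0 hx1).mul_const (x ^ (i + 1))
  simpa [pow_add, mul_assoc] using hpow.const_sub 1

theorem shiftedQPoch_anti_base {y : ℝ} (hx0 : 0 ≤ x) (hxy : x ≤ y) (hy1 : y ≤ 1) :
    shiftedQPoch y s z ≤ shiftedQPoch x s z :=
  prod_le_prod (fun _ _ => sub_nonneg.2 (pow_le_one₀ (hx0.trans hxy) hy1))
    fun _ _ => sub_le_sub_left (pow_le_pow_left₀ hx0 hxy _) 1

theorem one_sub_pow_div_le_shiftedQPoch (hx0 : 0 ≤ x) (hx1 : x < 1) :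
    1 - x ^ (s + 1) / (1 - x) ≤ shiftedQPoch x s z := by
  have hsum : ∑ i ∈ range z, x ^ (s + i + 1) ≤ x ^ (s + 1) / (1 - x) := by
    have := geom_sum_Ico_le_of_lt_one (m := s + 1) (n := s + 1 + z) hx0 hx1
    rw [sum_Ico_eq_sum_range, Nat.add_sub_cancel_left] at this
    simpa only [add_right_comm s] using this
  exact (sub_le_sub_left hsum 1).trans (one_sub_sum_le_prod_one_sub _
    (fun _ _ => pow_nonneg hx0 _) fun _ _ => pow_le_one₀ hx0 hx1.le)

theorem shiftedQPoch_half_gt : (0.288788 : ℝ) < shiftedQPoch 2⁻¹ 0 z := by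
  have hhalf0 : (0 : ℝ) ≤ 2⁻¹ := by norm_num
  have hhalf1 : (2⁻¹ : ℝ) < 1 := by norm_num
  have h25 : (0.288788 : ℝ) < shiftedQPoch 2⁻¹ 0 25 * (1 - 2⁻¹ ^ 25) := by
    norm_num [shiftedQPoch, prod_range_succ]
  have htail : 1 - (2⁻¹ : ℝ) ^ 25 ≤ shiftedQPoch 2⁻¹ 25 z := by
    convert one_sub_pow_div_le_shiftedQPoch 25 z hhalf0 hhalf1 using 2
    norm_num
  calc (0.288788 : ℝ) < shiftedQPoch 2⁻¹ 0 25 * (1 - 2⁻¹ ^ 25) := h25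
    _ ≤ shiftedQPoch 2⁻¹ 0 25 * shiftedQPoch 2⁻¹ 25 z :=
      mul_le_mul_of_nonneg_left htail (shiftedQPoch_pos _ _ hhalf0 hhalf1).le
    _ = shiftedQPoch 2⁻¹ 0 (25 + z) := by rw [shiftedQPoch_add, zero_add]
    _ ≤ shiftedQPoch 2⁻¹ 0 z := shiftedQPoch_le_of_le_length 0 hhalf0 hhalf1 (by omega)

end shiftedQPoch

theorem gaussR_add_left (q s z : ℕ) :
    gaussR q (s + z) z =
      ∏ i ∈ range z, ((q : ℝ) ^ (s + i + 1) - 1) / ((q : ℝ) ^ (i + 1) - 1) := by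
  rw [gaussR, if_pos (Nat.le_add_left z s), Nat.add_sub_cancel]
  simp only [add_assoc]

theorem pow_mul_div_gaussR_add_left {q : ℕ} (hq : 1 < q) (s z : ℕ) :
    (q : ℝ) ^ (s * z) / gaussR q (s + z) z =
      shiftedQPoch (q : ℝ)⁻¹ 0 z / shiftedQPoch (q : ℝ)⁻¹ s z := by
  have hq' : (1 : ℝ) < q := by exact_mod_cast hq
  rw [gaussR_add_left, pow_mul, ← card_range z, ← prod_const, card_range, shiftedQPoch,
    shiftedQPoch, ← prod_div_distrib, ← prod_div_distrib]
  refine prod_congr rfl fun i _ => ?_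
  have hnum : (q : ℝ) ^ (s + i + 1) - 1 ≠ 0 := (sub_pos.2 (one_lt_pow₀ hq' (by omega))).ne'
  have hden : 1 - (q : ℝ)⁻¹ ^ (s + i + 1) ≠ 0 :=
    (one_sub_pow_succ_pos (by positivity) (inv_lt_one_of_one_lt₀ hq') _).ne'
  rw [div_div_eq_mul_div, div_eq_div_iff hnum hden, inv_pow, inv_pow]
  field_simp
  ring

/-- Proposition (LMRD code size vs. Singleton bound): for integers `q ≥ 2` and `z ≥ 1`, the
ratio `g(s) = q^{sz} / [s+z, z]_q` is strictly monotonically decreasing in `s` and converges,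
as `s → ∞`, to `(1/q;1/q)_z = ∏_{i=1}^{z} (1 - q^{-i}) > 0.288788`. -/
theorem stmt14 (q z : ℕ) (hq : 2 ≤ q) (hz : 1 ≤ z) :
    StrictAnti (fun s : ℕ => (q : ℝ) ^ (s * z) / gaussR q (s + z) z) ∧
    Filter.Tendsto (fun s : ℕ => (q : ℝ) ^ (s * z) / gaussR q (s + z) z) Filter.atTop
      (nhds (∏ i ∈ Finset.range z, (1 - ((q : ℝ))⁻¹ ^ (i + 1)))) ∧
    (0.288788 : ℝ) < ∏ i ∈ Finset.range z, (1 - ((q : ℝ))⁻¹ ^ (i + 1)) := by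
  have hx0 : (0 : ℝ) < (q : ℝ)⁻¹ := by positivity
  have hx1 : (q : ℝ)⁻¹ < 1 := inv_lt_one_of_one_lt₀ (by exact_mod_cast hq)
  have hx2 : (q : ℝ)⁻¹ ≤ 2⁻¹ := inv_anti₀ two_pos (by exact_mod_cast hq)
  simp only [pow_mul_div_gaussR_add_left hq, ← shiftedQPoch_zero_left]
  refine ⟨fun s t hst => ?_, ?_, ?_⟩
  · exact div_lt_div_of_pos_left (shiftedQPoch_pos 0 z hx0.le hx1)
      (shiftedQPoch_pos s z hx0.le hx1) (shiftedQPoch_strictMono z hx0 hx1 (by omega) hst)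
  · have := (tendsto_const_nhds (x := shiftedQPoch (q : ℝ)⁻¹ 0 z)).div
      (tendsto_shiftedQPoch z hx0.le hx1) one_ne_zero
    rwa [div_one] at this
  · exact (shiftedQPoch_half_gt z).trans_le (shiftedQPoch_anti_base 0 z hx0.le hx2 (by norm_num))
end

section
/- Let q ≥ 2 be an integer and let k, d be integers with d even and 4 ≤ d ≤ 2k. For integers v ≥ 2k define the real number g(v) = q^{(v−k)(k−d/2+1)} · [v−k+d/2−1, d/2−1]_q / [v, k]_q (the size of a lifted MRD code divided by the Anticode bound). Then g is strictly monotonically decreasing in v, and g(v) converges as v → ∞ to (1/q; 1/q)_k / (1/q; 1/q)_{d/2−1}; moreover this limit satisfies (1/q;1/q)_k/(1/q;1/q)_{d/2−1} ≥ (q/(q−1)) · (1/q;1/q)_k > 0.577576. -/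
/-!
Writing `x = 1/q`, both Gaussian binomials factor as `q^{b(n-b)} (x;x)_n / ((x;x)_{n-b} (x;x)_b)`,
and all powers of `q` cancel in `g(v)`, leaving
`g(v) = (x;x)_k / (x;x)_{d/2-1} · (x;x)_{v-k+d/2-1} / (x;x)_v`.
Passing from `v` to `v + 1` multiplies the last quotient by `(1 - x^{v-k+d/2}) / (1 - x^{v+1}) < 1`,
and it tends to `1` because `(x;x)_n` decreases to a positive limit. Since `q/(q-1) = 1/(x;x)_1`,
the lower bound on the limit is `(x;x)_{d/2-1} ≤ (x;x)_1`. The numerical bound reduces to `q = 2`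
because `(x;x)_{1+k} / (x;x)_1` decreases in `x`; there `(1/2;1/2)_n - 2^{-n}` is nondecreasing in `n`,
so `(1/2;1/2)_n ≥ (1/2;1/2)_24 - 2^{-24} > 0.288788` for every `n`.
-/

open Finset Filter

/-- The `q`-Pochhammer value `(1/q; 1/q)_n = ∏_{i=1}^{n} (1 - q^{-i})` as a real number. -/
noncomputable def qPoch (q n : ℕ) : ℝ := ∏ i ∈ Finset.range n, (1 - ((q : ℝ))⁻¹ ^ (i + 1))

/-- The ratio of the size `q^{(v-k)(k-d/2+1)}` of a lifted MRD code to the Anticode bound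
`[v,k]_q / [v-k+d/2-1, d/2-1]_q`. -/
noncomputable def lmrdAnticodeRatio (q k d v : ℕ) : ℝ :=
  (q : ℝ) ^ ((v - k) * (k - d / 2 + 1)) * gaussR q (v - k + d / 2 - 1) (d / 2 - 1) / gaussR q v k

open Topology

section QPoch

variable {p q : ℕ}

lemma one_sub_inv_pow_nonneg (q n : ℕ) : 0 ≤ 1 - (q : ℝ)⁻¹ ^ n :=
  sub_nonneg.2 (pow_le_one₀ (by positivity) (Nat.cast_inv_le_one q))

lemma one_sub_inv_pow_pos (hq : 1 < q) {n : ℕ} (hn : n ≠ 0) : 0 < 1 - (q : ℝ)⁻¹ ^ n :=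
  sub_pos.2 (pow_lt_one₀ (by positivity) (inv_lt_one_of_one_lt₀ (by exact_mod_cast hq)) hn)

lemma one_sub_inv_pow_le_of_le (hp : 0 < p) (hpq : p ≤ q) (n : ℕ) :
    1 - (p : ℝ)⁻¹ ^ n ≤ 1 - (q : ℝ)⁻¹ ^ n := by
  have hinv : (q : ℝ)⁻¹ ≤ (p : ℝ)⁻¹ := by gcongr
  gcongr

lemma qPoch_succ (q n : ℕ) : qPoch q (n + 1) = qPoch q n * (1 - (q : ℝ)⁻¹ ^ (n + 1)) :=
  prod_range_succ _ _

lemma qPoch_one (q : ℕ) : qPoch q 1 = 1 - (q : ℝ)⁻¹ := by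
  simp [qPoch]

lemma qPoch_nonneg (q n : ℕ) : 0 ≤ qPoch q n :=
  prod_nonneg fun i _ => one_sub_inv_pow_nonneg q (i + 1)

lemma qPoch_pos (hq : 1 < q) (n : ℕ) : 0 < qPoch q n :=
  prod_pos fun _ _ => one_sub_inv_pow_pos hq (Nat.succ_ne_zero _)

lemma qPoch_le_one (q n : ℕ) : qPoch q n ≤ 1 :=
  prod_le_one (fun i _ => one_sub_inv_pow_nonneg q (i + 1))
    fun _ _ => sub_le_self _ (by positivity)

lemma qPoch_antitone (q : ℕ) : Antitone (qPoch q) :=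
  antitone_nat_of_succ_le fun n => by
    rw [qPoch_succ]
    exact mul_le_of_le_one_right (qPoch_nonneg q n) (sub_le_self _ (by positivity))

lemma qPoch_le_qPoch_of_le (hp : 0 < p) (hpq : p ≤ q) (n : ℕ) : qPoch p n ≤ qPoch q n :=
  prod_le_prod (fun i _ => one_sub_inv_pow_nonneg p (i + 1))
    fun i _ => one_sub_inv_pow_le_of_le hp hpq (i + 1)

lemma qPoch_add_div_qPoch (hq : 1 < q) (a n : ℕ) :
    qPoch q (a + n) / qPoch q a = ∏ i ∈ range n, (1 - (q : ℝ)⁻¹ ^ (a + (i + 1))) := by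
  rw [qPoch, prod_range_add, ← qPoch, mul_div_cancel_left₀ _ (qPoch_pos hq a).ne']
  simp only [add_assoc]

lemma qPoch_add_div_qPoch_le_of_le (hp : 1 < p) (hpq : p ≤ q) (a n : ℕ) :
    qPoch p (a + n) / qPoch p a ≤ qPoch q (a + n) / qPoch q a := by
  rw [qPoch_add_div_qPoch hp, qPoch_add_div_qPoch (hp.trans_le hpq)]
  exact prod_le_prod (fun i _ => one_sub_inv_pow_nonneg p _)
    fun i _ => one_sub_inv_pow_le_of_le (by omega) hpq _

lemma qPoch_succ_div_qPoch_succ_lt (hq : 1 < q) {a b : ℕ} (hab : a < b) :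
    qPoch q (a + 1) / qPoch q (b + 1) < qPoch q a / qPoch q b := by
  have hx : (q : ℝ)⁻¹ ^ (b + 1) < (q : ℝ)⁻¹ ^ (a + 1) :=
    pow_lt_pow_right_of_lt_one₀ (by positivity) (inv_lt_one_of_one_lt₀ (by exact_mod_cast hq))
      (by omega)
  have hfactor : (1 - (q : ℝ)⁻¹ ^ (a + 1)) / (1 - (q : ℝ)⁻¹ ^ (b + 1)) < 1 :=
    (div_lt_one (one_sub_inv_pow_pos hq b.succ_ne_zero)).2 (sub_lt_sub_left hx 1)
  rw [qPoch_succ, qPoch_succ, mul_div_mul_comm]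
  exact mul_lt_of_lt_one_right (div_pos (qPoch_pos hq a) (qPoch_pos hq b)) hfactor

lemma qPoch_sub_inv_pow_monotone (hq : 2 ≤ q) :
    Monotone fun n => qPoch q n - (q : ℝ)⁻¹ ^ n := by
  refine monotone_nat_of_le_succ fun n => ?_
  have hx : (q : ℝ)⁻¹ ≤ 1 / 2 := by
    rw [one_div]
    exact inv_anti₀ two_pos (by exact_mod_cast hq)
  have hP := qPoch_le_one q n
  have hxn : 0 ≤ (q : ℝ)⁻¹ ^ n := by positivity
  have hx0 : 0 ≤ (q : ℝ)⁻¹ := by positivity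
  rw [qPoch_succ, pow_succ]
  -- the increment is `x^n (1 - x - x (x;x)_n)` with `x = 1/q ≤ 1/2` and `(x;x)_n ≤ 1`
  nlinarith [mul_nonneg hxn (mul_nonneg hx0 (sub_nonneg.2 hP)),
    mul_nonneg hxn (by linarith : (0 : ℝ) ≤ 1 / 2 - (q : ℝ)⁻¹)]

lemma qPoch_sub_inv_pow_le (hq : 2 ≤ q) (N n : ℕ) : qPoch q N - (q : ℝ)⁻¹ ^ N ≤ qPoch q n := by
  rcases le_total N n with h | h
  · exact (qPoch_sub_inv_pow_monotone hq h).trans (sub_le_self _ (by positivity))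
  · exact (sub_le_self _ (by positivity)).trans (qPoch_antitone q h)

lemma qPoch_two_gt (n : ℕ) : (0.288788 : ℝ) < qPoch 2 n := by
  refine lt_of_lt_of_le ?_ (qPoch_sub_inv_pow_le le_rfl 24 n)
  norm_num [qPoch, prod_range_succ]

lemma exists_tendsto_qPoch (hq : 2 ≤ q) : ∃ L : ℝ, 0 < L ∧ Tendsto (qPoch q) atTop (𝓝 L) := by
  refine ⟨⨅ n, qPoch q n, ?_, tendsto_atTop_ciInf (qPoch_antitone q) ⟨0, ?_⟩⟩
  · refine lt_of_lt_of_le (by norm_num : (0 : ℝ) < 0.288788) (le_ciInf fun n => ?_)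
    exact (qPoch_two_gt n).le.trans (qPoch_le_qPoch_of_le two_pos hq n)
  · rintro _ ⟨n, rfl⟩
    exact qPoch_nonneg q n

lemma tendsto_qPoch_sub_add_div_qPoch (hq : 2 ≤ q) (k m : ℕ) :
    Tendsto (fun v => qPoch q (v - k + m) / qPoch q v) atTop (𝓝 1) := by
  obtain ⟨L, hL, hlim⟩ := exists_tendsto_qPoch hq
  have hshift : Tendsto (fun v : ℕ => v - k + m) atTop atTop :=
    tendsto_atTop_mono (fun v => Nat.le_add_right _ _) (tendsto_sub_atTop_nat k)
  have hdiv := (hlim.comp hshift).div hlim hL.ne'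
  rw [div_self hL.ne'] at hdiv
  exact hdiv

lemma natCast_div_sub_one_mul_qPoch (hq : 1 < q) (k : ℕ) :
    (q : ℝ) / (q - 1) * qPoch q k = qPoch q k / qPoch q 1 := by
  have : (q : ℝ) ≠ 0 := by positivity
  rw [qPoch_one, ← one_div (q : ℝ), one_sub_div this, div_div_eq_mul_div]
  ring

lemma qPoch_div_qPoch_one_le (hq : 1 < q) {m : ℕ} (hm : 1 ≤ m) (k : ℕ) :
    qPoch q k / qPoch q 1 ≤ qPoch q k / qPoch q m :=
  div_le_div_of_nonneg_left (qPoch_nonneg q k) (qPoch_pos hq m) (qPoch_antitone q hm)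

lemma lt_qPoch_div_qPoch_one (hq : 2 ≤ q) (k : ℕ) : (0.577576 : ℝ) < qPoch q k / qPoch q 1 :=
  calc (0.577576 : ℝ) < qPoch 2 (1 + k) / qPoch 2 1 := by
        have := qPoch_two_gt (1 + k)
        rw [qPoch_one]
        norm_num
        linarith
    _ ≤ qPoch q (1 + k) / qPoch q 1 := qPoch_add_div_qPoch_le_of_le one_lt_two hq 1 k
    _ ≤ qPoch q k / qPoch q 1 :=
        div_le_div_of_nonneg_right (qPoch_antitone q (by omega)) (qPoch_nonneg q 1)

end QPoch

lemma natCast_pow_sub_one (q e : ℕ) (hq : q ≠ 0) :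
    (q : ℝ) ^ e - 1 = (q : ℝ) ^ e * (1 - (q : ℝ)⁻¹ ^ e) := by
  rw [mul_sub, mul_one, ← mul_pow, mul_inv_cancel₀ (by exact_mod_cast hq), one_pow]

lemma gaussR_eq_qPoch {q n b : ℕ} (hq : 1 < q) (h : b ≤ n) :
    gaussR q n b = (q : ℝ) ^ (b * (n - b)) * (qPoch q n / qPoch q (n - b)) / qPoch q b := by
  have hfactor : ∀ i ∈ range b, ((q : ℝ) ^ (n - b + (i + 1)) - 1) / ((q : ℝ) ^ (i + 1) - 1) =
      (q : ℝ) ^ (n - b) * (1 - (q : ℝ)⁻¹ ^ (n - b + (i + 1))) / (1 - (q : ℝ)⁻¹ ^ (i + 1)) := by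
    intro i _
    have := (one_sub_inv_pow_pos hq i.succ_ne_zero).ne'
    rw [natCast_pow_sub_one q _ (by omega), natCast_pow_sub_one q _ (by omega), pow_add]
    field_simp
  rw [gaussR, if_pos h, prod_congr rfl hfactor, prod_div_distrib, prod_mul_distrib, prod_const,
    card_range, ← pow_mul, mul_comm (n - b), ← qPoch_add_div_qPoch hq, Nat.sub_add_cancel h, ← qPoch]

lemma lmrdAnticodeRatio_eq {q k d v : ℕ} (hq : 1 < q) (hd : 2 ≤ d) (hdk : d ≤ 2 * k) (hkv : k ≤ v) :
    lmrdAnticodeRatio q k d v =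
      qPoch q k / qPoch q (d / 2 - 1) * (qPoch q (v - k + (d / 2 - 1)) / qPoch q v) := by
  rw [lmrdAnticodeRatio]
  set m := d / 2 - 1 with hm
  have hpow : (q : ℝ) ^ ((v - k) * (k - m)) * (q : ℝ) ^ (m * (v - k)) = (q : ℝ) ^ (k * (v - k)) := by
    rw [← pow_add, mul_comm m, ← Nat.mul_add, Nat.sub_add_cancel (by omega), mul_comm]
  rw [show v - k + d / 2 - 1 = v - k + m by omega,
    show k - d / 2 + 1 = k - m by omega, gaussR_eq_qPoch hq (by omega), gaussR_eq_qPoch hq hkv,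
    show v - k + m - m = v - k by omega]
  clear_value m
  have := (qPoch_pos hq (v - k)).ne'
  have := (qPoch_pos hq v).ne'
  have := (qPoch_pos hq m).ne'
  have := (qPoch_pos hq k).ne'
  field_simp
  linear_combination qPoch q (v - k + m) * hpow

theorem stmt15_general (q k d : ℕ) (hq : 2 ≤ q) (hd4 : 4 ≤ d) (hdk : d ≤ 2 * k) :
    (∀ v : ℕ, 2 * k ≤ v → lmrdAnticodeRatio q k d (v + 1) < lmrdAnticodeRatio q k d v) ∧
    Filter.Tendsto (fun v : ℕ => lmrdAnticodeRatio q k d v) Filter.atTop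
      (nhds (qPoch q k / qPoch q (d / 2 - 1))) ∧
    ((q : ℝ) / ((q : ℝ) - 1)) * qPoch q k ≤ qPoch q k / qPoch q (d / 2 - 1) ∧
    (0.577576 : ℝ) < ((q : ℝ) / ((q : ℝ) - 1)) * qPoch q k := by
  have hq1 : 1 < q := hq
  have hratio : ∀ v, k ≤ v → lmrdAnticodeRatio q k d v =
      qPoch q k / qPoch q (d / 2 - 1) * (qPoch q (v - k + (d / 2 - 1)) / qPoch q v) :=
    fun v hv => lmrdAnticodeRatio_eq hq1 (by omega) hdk hv
  have hC : 0 < qPoch q k / qPoch q (d / 2 - 1) := div_pos (qPoch_pos hq1 k) (qPoch_pos hq1 _)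
  rw [natCast_div_sub_one_mul_qPoch hq1]
  refine ⟨fun v hv => ?_, ?_, qPoch_div_qPoch_one_le hq1 (by omega) k, lt_qPoch_div_qPoch_one hq k⟩
  · rw [hratio (v + 1) (by omega), hratio v (by omega),
      show v + 1 - k + (d / 2 - 1) = v - k + (d / 2 - 1) + 1 by omega]
    exact mul_lt_mul_of_pos_left (qPoch_succ_div_qPoch_succ_lt hq1 (by omega)) hC
  · have hlim := (tendsto_qPoch_sub_add_div_qPoch hq k (d / 2 - 1)).const_mul
      (qPoch q k / qPoch q (d / 2 - 1))
    rw [mul_one] at hlim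
    exact hlim.congr' ((eventually_ge_atTop k).mono fun v hv => (hratio v hv).symm)

/-- Proposition (LMRD code size vs. Anticode bound): for an integer `q ≥ 2`, `d` even with
`4 ≤ d ≤ 2k`, the ratio `g(v) = q^{(v-k)(k-d/2+1)} · [v-k+d/2-1, d/2-1]_q / [v,k]_q` is
strictly monotonically decreasing for `v ≥ 2k` and converges, as `v → ∞`, to
`(1/q;1/q)_k / (1/q;1/q)_{d/2-1} ≥ (q/(q-1)) · (1/q;1/q)_k > 0.577576`. -/
theorem stmt15 (q k d : ℕ) (hq : 2 ≤ q) (hd2 : 2 ∣ d) (hd4 : 4 ≤ d) (hdk : d ≤ 2 * k) :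
    (∀ v : ℕ, 2 * k ≤ v → lmrdAnticodeRatio q k d (v + 1) < lmrdAnticodeRatio q k d v) ∧
    Filter.Tendsto (fun v : ℕ => lmrdAnticodeRatio q k d v) Filter.atTop
      (nhds (qPoch q k / qPoch q (d / 2 - 1))) ∧
    ((q : ℝ) / ((q : ℝ) - 1)) * qPoch q k ≤ qPoch q k / qPoch q (d / 2 - 1) ∧
    (0.577576 : ℝ) < ((q : ℝ) / ((q : ℝ) - 1)) * qPoch q k :=
  stmt15_general q k d hq hd4 hdk
end

section
/- Let q be a prime power, d an even positive integer, and k, v₀, s integers with 1 ≤ k ≤ v₀, k ≤ s, 2s ≥ d, and d ≤ 2k. Write a(n) = A_q(n, d; k), b = q^{s(k−d/2+1)}, and s' = s − d/2 + k. Then the limit as l → ∞ of ( b^l · a(v₀) + a(s') · (b^l − 1)/(b − 1) ) / ( [v₀+ls, k]_q / [v₀+ls−k+d/2−1, d/2−1]_q ) equals ( a(v₀) + a(s')/(q^{s(k−d/2+1)} − 1) ) / q^{(v₀−k)(k−d/2+1)} · ∏_{i=d/2}^{k} (1 − q^{−i}). -/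
open Finset Filter

open scoped Topology

/-! Dividing numerator and denominator by `b^l`, the numerator becomes
`a(v₀) + a(s')/(b-1) - a(s')/(b-1)·b^{-l}`, and the quotient of Gaussian binomials collapses to
`∏_{i=d/2}^{k} (q^{v₀-k+i}·(q^s)^l - 1)/(q^i - 1)`, a product of `k-d/2+1` factors each of which,
divided by `(q^s)^l`, tends to `q^{v₀-k+i}/(q^i-1) = q^{v₀-k}/(1-q^{-i})`. Since
`b = (q^s)^{k-d/2+1}`, the quotient converges to the quotient of the two limits. -/

theorem gaussR_div_gaussR_eq_prod_Ico {q n k m : ℕ} (hq : 1 < q) (hmk : m ≤ k) (hkn : k ≤ n) :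
    gaussR q n k / gaussR q (n - k + m) m =
      ∏ i ∈ Ico m k, ((q : ℝ) ^ (n - k + (i + 1)) - 1) / ((q : ℝ) ^ (i + 1) - 1) := by
  have hq' : (1 : ℝ) < q := by exact_mod_cast hq
  rw [gaussR, if_pos hkn, gaussR, if_pos (by omega), Nat.add_sub_cancel,
    ← prod_range_mul_prod_Ico _ hmk]
  refine mul_div_cancel_left₀ _ (prod_ne_zero_iff.2 fun i _ => div_ne_zero ?_ ?_) <;>
    exact sub_ne_zero.2 (one_lt_pow₀ hq' (by omega)).ne'

theorem gaussR_div_gaussR_eq_prod_Icc {q n k e : ℕ} (hq : 1 < q) (he : 1 ≤ e) (hek : e ≤ k + 1)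
    (hkn : k ≤ n) :
    gaussR q n k / gaussR q (n - k + e - 1) (e - 1) =
      ∏ i ∈ Icc e k, ((q : ℝ) ^ (n - k + i) - 1) / ((q : ℝ) ^ i - 1) := by
  rw [Nat.add_sub_assoc he, gaussR_div_gaussR_eq_prod_Ico hq (by omega) hkn,
    prod_Ico_add' (fun i => ((q : ℝ) ^ (n - k + i) - 1) / ((q : ℝ) ^ i - 1)),
    Nat.sub_add_cancel he, Ico_add_one_right_eq_Icc]

theorem tendsto_geom_sum_add_div_pow {b : ℝ} (hb : 1 < b) (A B : ℝ) :
    Tendsto (fun l : ℕ => (b ^ l * A + B * ((b ^ l - 1) / (b - 1))) / b ^ l) atTop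
      (𝓝 (A + B / (b - 1))) := by
  have hb1 : b - 1 ≠ 0 := sub_ne_zero.2 hb.ne'
  have key : ∀ l : ℕ, (b ^ l * A + B * ((b ^ l - 1) / (b - 1))) / b ^ l =
      A + B / (b - 1) - B / (b - 1) * b⁻¹ ^ l := by
    intro l
    have hbl : b ^ l ≠ 0 := pow_ne_zero l (by positivity)
    rw [inv_pow]
    field_simp
    ring
  simp_rw [key]
  simpa using ((tendsto_pow_atTop_nhds_zero_of_lt_one (by positivity)
    (inv_lt_one_of_one_lt₀ hb)).const_mul (B / (b - 1))).const_sub (A + B / (b - 1))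

theorem tendsto_prod_mul_pow_sub_one_div {ι : Type*} (s : Finset ι) {t : ℝ} (ht : 1 < t)
    (c d : ι → ℝ) :
    Tendsto (fun l : ℕ => (∏ i ∈ s, (c i * t ^ l - 1) / d i) / (t ^ #s) ^ l) atTop
      (𝓝 (∏ i ∈ s, c i / d i)) := by
  have key : ∀ l : ℕ, (∏ i ∈ s, (c i * t ^ l - 1) / d i) / (t ^ #s) ^ l =
      ∏ i ∈ s, (c i - t⁻¹ ^ l) / d i := by
    intro l
    have htl : t ^ l ≠ 0 := pow_ne_zero l (by positivity)
    rw [pow_right_comm, ← prod_const, ← prod_div_distrib]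
    refine prod_congr rfl fun i _ => ?_
    rw [inv_pow]
    field_simp
  simp_rw [key]
  refine tendsto_finsetProd _ fun i _ => ?_
  simpa using ((tendsto_pow_atTop_nhds_zero_of_lt_one (by positivity)
    (inv_lt_one_of_one_lt₀ ht)).const_sub (c i)).div_const (d i)

theorem prod_pow_add_div_pow_sub_one {ι : Type*} (s : Finset ι) {x : ℝ} (hx : x ≠ 0) (r : ℕ)
    (e : ι → ℕ) :
    ∏ i ∈ s, x ^ (r + e i) / (x ^ e i - 1) = x ^ (r * #s) / ∏ i ∈ s, (1 - x⁻¹ ^ e i) := by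
  rw [pow_mul, ← prod_const, ← prod_div_distrib]
  refine prod_congr rfl fun i _ => ?_
  have hxi : x ^ e i ≠ 0 := pow_ne_zero _ hx
  rw [inv_pow, inv_eq_one_div, one_sub_div hxi, div_div_eq_mul_div, pow_add]

theorem stmt16_general (q : ℕ) (F : Type) [Field F] [Fintype F] (hF : Fintype.card F = q)
    (k d v₀ s : ℕ) (hd0 : 0 < d) (hd2 : 2 ∣ d)
    (hkv : k ≤ v₀) (hs : d ≤ 2 * s) (hdk : d ≤ 2 * k) :
    Filter.Tendsto
      (fun l : ℕ =>
        (((q : ℝ) ^ (s * (k - d / 2 + 1))) ^ l * (Aq F v₀ d k : ℝ) +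
            (Aq F (s - d / 2 + k) d k : ℝ) *
              ((((q : ℝ) ^ (s * (k - d / 2 + 1))) ^ l - 1) /
                ((q : ℝ) ^ (s * (k - d / 2 + 1)) - 1))) /
          (gaussR q (v₀ + l * s) k / gaussR q (v₀ + l * s - k + d / 2 - 1) (d / 2 - 1)))
      Filter.atTop
      (nhds
        (((Aq F v₀ d k : ℝ) +
            (Aq F (s - d / 2 + k) d k : ℝ) / ((q : ℝ) ^ (s * (k - d / 2 + 1)) - 1)) /
            (q : ℝ) ^ ((v₀ - k) * (k - d / 2 + 1)) *
          ∏ i ∈ Finset.Icc (d / 2) k, (1 - ((q : ℝ))⁻¹ ^ i))) := by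
  have hq : 1 < q := hF ▸ Fintype.one_lt_card
  have hq' : (1 : ℝ) < q := by exact_mod_cast hq
  set e := d / 2 with he_def
  have he : 1 ≤ e := by omega
  have hcard : #(Icc e k) = k - e + 1 := by rw [Nat.card_Icc]; omega
  set t : ℝ := (q : ℝ) ^ s
  have ht : 1 < t := one_lt_pow₀ hq' (by omega)
  have hb : (q : ℝ) ^ (s * (k - e + 1)) = t ^ (k - e + 1) := pow_mul _ _ _
  have hgauss (l : ℕ) :
      gaussR q (v₀ + l * s) k / gaussR q (v₀ + l * s - k + e - 1) (e - 1) =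
        ∏ i ∈ Icc e k, ((q : ℝ) ^ (v₀ - k + i) * t ^ l - 1) / ((q : ℝ) ^ i - 1) := by
    rw [gaussR_div_gaussR_eq_prod_Icc hq he (by omega) (by omega)]
    refine prod_congr rfl fun i _ => ?_
    rw [← pow_mul, ← pow_add, mul_comm s l]
    congr 3
    omega
  have hb1 : 1 < t ^ (k - e + 1) := one_lt_pow₀ ht (by omega)
  have hlimit_ne : ∏ i ∈ Icc e k, (q : ℝ) ^ (v₀ - k + i) / ((q : ℝ) ^ i - 1) ≠ 0 :=
    prod_ne_zero_iff.2 fun i hi => div_ne_zero (by positivity)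
      (sub_ne_zero.2 (one_lt_pow₀ hq' (Nat.one_le_iff_ne_zero.1 (he.trans (mem_Icc.1 hi).1))).ne')
  have hlim := (tendsto_geom_sum_add_div_pow hb1 (Aq F v₀ d k)
    (Aq F (s - e + k) d k)).div (tendsto_prod_mul_pow_sub_one_div (Icc e k) ht _ _) hlimit_ne
  rw [prod_pow_add_div_pow_sub_one _ (by positivity), hcard, div_div_eq_mul_div,
    mul_div_right_comm] at hlim
  rw [hb]
  refine hlim.congr fun l => ?_
  rw [Pi.div_apply, hgauss, div_div_div_cancel_right₀ (pow_ne_zero l (by positivity))]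

/-- Proposition (ratio of the arithmetic-progression linkage lower bound to the Anticode
bound): with `a(n) = A_q(n,d;k)`, `b = q^{s(k-d/2+1)}` and `s' = s-d/2+k`, the ratio
`(b^l a(v₀) + a(s')·(b^l-1)/(b-1)) / ([v₀+ls, k]_q / [v₀+ls-k+d/2-1, d/2-1]_q)` converges,
as `l → ∞`, to `(a(v₀) + a(s')/(q^{s(k-d/2+1)}-1)) / q^{(v₀-k)(k-d/2+1)} · ∏_{i=d/2}^{k} (1-q^{-i})`. -/
theorem stmt16 (q : ℕ) (F : Type) [Field F] [Fintype F] (hF : Fintype.card F = q)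
    (k d v₀ s : ℕ) (hd0 : 0 < d) (hd2 : 2 ∣ d)
    (hk : 1 ≤ k) (hkv : k ≤ v₀) (hks : k ≤ s) (hs : d ≤ 2 * s) (hdk : d ≤ 2 * k) :
    Filter.Tendsto
      (fun l : ℕ =>
        (((q : ℝ) ^ (s * (k - d / 2 + 1))) ^ l * (Aq F v₀ d k : ℝ) +
            (Aq F (s - d / 2 + k) d k : ℝ) *
              ((((q : ℝ) ^ (s * (k - d / 2 + 1))) ^ l - 1) /
                ((q : ℝ) ^ (s * (k - d / 2 + 1)) - 1))) /
          (gaussR q (v₀ + l * s) k / gaussR q (v₀ + l * s - k + d / 2 - 1) (d / 2 - 1)))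
      Filter.atTop
      (nhds
        (((Aq F v₀ d k : ℝ) +
            (Aq F (s - d / 2 + k) d k : ℝ) / ((q : ℝ) ^ (s * (k - d / 2 + 1)) - 1)) /
            (q : ℝ) ^ ((v₀ - k) * (k - d / 2 + 1)) *
          ∏ i ∈ Finset.Icc (d / 2) k, (1 - ((q : ℝ))⁻¹ ^ i))) :=
  stmt16_general q F hF k d v₀ s hd0 hd2 hkv hs hdk
end
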